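/- arXiv:1512.07371 — 4 statements merged into one kernel-verified Lean document; each statement's English description precedes it below -/
import Mathlib

section
/- Fix a positive integer k and let C = {0, 1, …, k−1, ω}. Let n⃗ = (n_1, …, n_m) with all n_j ∈ C. If T and T′ are rooted trees such that for every j ∈ Σ_k, T has n_j rootchildren v with EV[T(v)] = j and T′ has n_j rootchildren v′ with EV[T′(v′)] = j (where the value ω means 'at least k' and a value n < ω means 'exactly n'), then T ≡_k T′; consequently EV[T] is uniquely determined by n⃗. -/
open FirstOrder MeasureTheory
open scoped Classical

/-! ### Rooted trees -/

/-- A rooted tree: a set of finite sequences of naturals (addresses of vertices),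
containing the root `[]` and closed under passing to the parent (`List.dropLast`). -/
structure RTree where
  carrier : Set (List ℕ)
  root_mem : [] ∈ carrier
  dropLast_mem : ∀ v ∈ carrier, v.dropLast ∈ carrier

namespace RTree

/-- The first-order language of rooted trees: a constant symbol `R` (the root) and a
unary function symbol `π` (the parent function). -/
def treeLang : FirstOrder.Language where
  Functions := fun n => match n with
    | 0 => Unit
    | 1 => Unit
    | _ => Empty
  Relations := fun _ => Empty

/-- The type of vertices of a rooted tree. -/
def V (T : RTree) : Type := {v : List ℕ // v ∈ T.carrier}

/-- The root, as a vertex. -/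
def rootV (T : RTree) : T.V := ⟨[], T.root_mem⟩

/-- The parent of a vertex (the root is its own parent). -/
def parentV (T : RTree) (v : T.V) : T.V := ⟨v.1.dropLast, T.dropLast_mem _ v.2⟩

/-- A rooted tree as a structure for the language of rooted trees: the constant is
interpreted as the root and the unary function as the parent function (fixing the
root, where the parent is undefined). -/
noncomputable instance treeStructure (T : RTree) : treeLang.Structure T.V where
  funMap {n} f x :=
    match n, f, x with
    | 0, _, _ => rootV T
    | 1, _, x => parentV T (x 0)
  RelMap {n} r := nomatch r

end RTree

namespace FirstOrder.Language

/-- The quantifier depth of a first-order formula: the depth of nesting of its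
quantifiers. -/
def BoundedFormula.qdepth {L : FirstOrder.Language} {α : Type*} :
    ∀ {n}, L.BoundedFormula α n → ℕ
  | _, .falsum => 0
  | _, .equal _ _ => 0
  | _, .rel _ _ => 0
  | _, .imp f g => max f.qdepth g.qdepth
  | _, .all f => f.qdepth + 1

end FirstOrder.Language

namespace RTree

/-- Two rooted trees are `≡ₖ`-equivalent if they agree on all first-order sentences of
quantifier depth at most `k`. -/
def TreeEquiv (k : ℕ) (T T' : RTree) : Prop :=
  ∀ A : treeLang.Sentence, A.qdepth ≤ k → (T.V ⊨ A ↔ T'.V ⊨ A)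

/-- `≡ₖ` as an equivalence relation (setoid) on rooted trees. -/
def treeSetoid (k : ℕ) : Setoid RTree where
  r := TreeEquiv k
  iseqv := ⟨fun _ _ _ => Iff.rfl, fun h A hA => (h A hA).symm,
    fun h h' A hA => (h A hA).trans (h' A hA)⟩

/-- `Σₖ`: the set of `≡ₖ`-equivalence classes of rooted trees. -/
def TreeClass (k : ℕ) : Type := Quotient (treeSetoid k)

/-- The Ehrenfeucht value of a rooted tree: its `≡ₖ`-equivalence class. -/
def EV (k : ℕ) (T : RTree) : TreeClass k := Quotient.mk (treeSetoid k) T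

/-- `T(v)`: the subtree of `T` consisting of `v` and all its descendants, rooted
at `v`. -/
def subtreeAt (T : RTree) (v : List ℕ) (hv : v ∈ T.carrier) : RTree where
  carrier := {w | v ++ w ∈ T.carrier}
  root_mem := by simpa using hv
  dropLast_mem := fun w hw => by
    rcases eq_or_ne w [] with h | h
    · subst h; simpa using hv
    · have h2 := T.dropLast_mem _ hw
      rwa [List.dropLast_append_of_ne_nil h] at h2

/-- The number of elements of `S`, truncated at `k` (so the value `k` means
"at least `k`", i.e. `ω`). -/
noncomputable def truncCount (k : ℕ) (S : Set ℕ) : ℕ := (min (k : ℕ∞) S.encard).toNat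

/-- The truncated number of rootchildren `v` of `T` with `EV[T(v)] = j`; a value
`< k` is the exact count, while the value `k` stands for `ω`, i.e. "at least `k`". -/
noncomputable def childClassCount (k : ℕ) (T : RTree) (j : TreeClass k) : ℕ :=
  truncCount k {i : ℕ | ∃ h : [i] ∈ T.carrier, EV k (T.subtreeAt [i] h) = j}

end RTree

/-!
The proof does not use that `Σₖ` is finite; it is a composition argument driven by the syntax
of the sentence. By induction on a formula `φ(x₁, …, xₙ)` we find finitely many formulas `Θ` and
counting conditions `Ξ` (sentences with thresholds), all of depth `≤ φ.qdepth`, such that `φ`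
has the same truth value at `(T, f)` and `(T', g)` whenever some matching of rootchildren puts
each pair `f l`, `g l` in matched branches (or both at the root), makes matched subtrees agree
on `Θ` at the tuples projected into them, and makes the unmatched rootchildren satisfy each
sentence of `Ξ` equally often up to its threshold. An atomic formula `π^p x = π^q y` is decided
inside a single branch. For `∀ x ψ`, a new vertex `x` is the root, or lies in a matched branch,
where an `∃`-formula one quantifier deeper provides a partner, or lies in an unmatched branch,
where a threshold-one count provides an unmatched partner branch. For a sentence of depth `≤ k`
the empty matching qualifies, because the truncated counts of the `≡ₖ`-classes of rootchildren
determine how many rootchildren, up to `k`, satisfy a given sentence of depth `≤ k`.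
-/

namespace Option.Rel

variable {α β : Type*} {r s : α → β → Prop} {a : Option α} {b : Option β}

lemma mono (h : Option.Rel r a b) (hrs : ∀ x y, r x y → s x y) : Option.Rel s a b := by
  cases h with
  | some hxy => exact .some (hrs _ _ hxy)
  | none => exact .none

lemma flip (h : Option.Rel r a b) : Option.Rel (fun y x => r x y) b a := by
  cases h with
  | some hxy => exact .some hxy
  | none => exact .none

lemma eq_none_iff (h : Option.Rel r a b) : a = Option.none ↔ b = Option.none := by
  cases h <;> simp

lemma exists_of_some_left {x : α} (h : Option.Rel r (Option.some x) b) :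
    ∃ y, b = Option.some y ∧ r x y := by
  cases h with
  | some hxy => exact ⟨_, rfl, hxy⟩

end Option.Rel

namespace Set

variable {α β γ : Type*}

lemma le_encard_sdiff_singleton_iff {A : Set α} {B : Set β} {a : α} {b : β}
    {t : ℕ} (hab : a ∈ A ↔ b ∈ B) (h₀ : (t : ℕ∞) ≤ A.encard ↔ (t : ℕ∞) ≤ B.encard)
    (h₁ : (t : ℕ∞) + 1 ≤ A.encard ↔ (t : ℕ∞) + 1 ≤ B.encard) :
    (t : ℕ∞) ≤ (A \ {a}).encard ↔ (t : ℕ∞) ≤ (B \ {b}).encard := by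
  by_cases ha : a ∈ A
  · have hb := hab.1 ha
    rwa [← encard_sdiff_singleton_add_one ha, ← encard_sdiff_singleton_add_one hb,
      ENat.add_le_add_iff_right ENat.one_ne_top, ENat.add_le_add_iff_right ENat.one_ne_top] at h₁
  · rwa [sdiff_singleton_eq_self ha, sdiff_singleton_eq_self (mt hab.2 ha)]

lemma encard_preimage_eq_finsum (f : α → γ) {S : Set γ} (hS : S.Finite) :
    (f ⁻¹' S).encard = ∑ᶠ j ∈ S, (f ⁻¹' {j}).encard := by
  rw [← biUnion_preimage_singleton, hS.encard_biUnion (pairwiseDisjoint_fiber f S)]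

lemma min_encard_preimage_le {f : α → γ} {g : β → γ} {Q : Set γ} {k : ℕ∞}
    (h : ∀ j ∈ Q, min k (f ⁻¹' {j}).encard = min k (g ⁻¹' {j}).encard) :
    min k (f ⁻¹' Q).encard ≤ min k (g ⁻¹' Q).encard := by
  by_cases hbig : ∃ j ∈ Q, k ≤ (g ⁻¹' {j}).encard
  · obtain ⟨j, hj, hk⟩ := hbig
    refine (min_le_left _ _).trans (le_min le_rfl (hk.trans (encard_mono ?_)))
    exact preimage_mono (singleton_subset_iff.2 hj)
  simp only [not_exists, not_and, not_le] at hbig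
  have hfiber : ∀ j ∈ Q, (f ⁻¹' {j}).encard = (g ⁻¹' {j}).encard := fun j hj => by
    have hj' := h j hj
    rw [min_eq_right (hbig j hj).le] at hj'
    rcases le_total k (f ⁻¹' {j}).encard with hk | hk
    · exact absurd (min_eq_left hk ▸ hj') (hbig j hj).ne'
    · rwa [min_eq_right hk] at hj'
  -- every finite part of `f ⁻¹' Q` is covered by finitely many fibres
  refine min_le_min le_rfl (ENat.forall_natCast_le_iff_le.1 fun t ht => ?_)
  obtain ⟨F, hFQ, hFt⟩ := exists_subset_encard_eq ht
  have hFimage : (f '' F).Finite := (finite_of_encard_eq_coe hFt).image f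
  calc (t : ℕ∞) = F.encard := hFt.symm
    _ ≤ (f ⁻¹' (f '' F)).encard := encard_mono (subset_preimage_image f F)
    _ = ∑ᶠ j ∈ f '' F, (f ⁻¹' {j}).encard := encard_preimage_eq_finsum f hFimage
    _ = ∑ᶠ j ∈ f '' F, (g ⁻¹' {j}).encard :=
      finsum_mem_congr rfl fun j hj => hfiber j (image_subset_iff.2 hFQ hj)
    _ = (g ⁻¹' (f '' F)).encard := (encard_preimage_eq_finsum g hFimage).symm
    _ ≤ (g ⁻¹' Q).encard := encard_mono (preimage_mono (image_subset_iff.2 hFQ))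

lemma min_encard_preimage_eq {f : α → γ} {g : β → γ} {Q : Set γ} {k : ℕ∞}
    (h : ∀ j ∈ Q, min k (f ⁻¹' {j}).encard = min k (g ⁻¹' {j}).encard) :
    min k (f ⁻¹' Q).encard = min k (g ⁻¹' Q).encard :=
  le_antisymm (min_encard_preimage_le h) (min_encard_preimage_le fun j hj => (h j hj).symm)

end Set

namespace FirstOrder.Language.BoundedFormula

variable {L : Language} {α : Type*}

/-- Substitution for the bound variables (`BoundedFormula.subst` substitutes free ones). -/
def substBound : ∀ {m m' : ℕ}, L.BoundedFormula α m →
    (Fin m → L.Term (α ⊕ Fin m')) → L.BoundedFormula α m'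
  | _, _, .falsum, _ => .falsum
  | _, _, .equal t₁ t₂, ρ =>
      .equal (t₁.subst (Sum.elim (Term.var ∘ Sum.inl) ρ))
        (t₂.subst (Sum.elim (Term.var ∘ Sum.inl) ρ))
  | _, _, .rel R ts, ρ => .rel R fun i => (ts i).subst (Sum.elim (Term.var ∘ Sum.inl) ρ)
  | _, _, .imp φ ψ, ρ => (substBound φ ρ).imp (substBound ψ ρ)
  | _, _, .all φ, ρ => (substBound φ (Fin.snoc (fun l => (ρ l).relabel (Sum.map id Fin.castSucc))
      (Term.var (Sum.inr (Fin.last _))))).all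

lemma qdepth_substBound : ∀ {m m' : ℕ} (φ : L.BoundedFormula α m)
    (ρ : Fin m → L.Term (α ⊕ Fin m')), (substBound φ ρ).qdepth = φ.qdepth
  | _, _, .falsum, _ | _, _, .equal _ _, _ | _, _, .rel _ _, _ => rfl
  | _, _, .imp φ ψ, ρ => by
    simp only [substBound, BoundedFormula.qdepth, qdepth_substBound φ, qdepth_substBound ψ]
  | _, _, .all φ, ρ => by simp only [substBound, BoundedFormula.qdepth, qdepth_substBound φ]

variable {M : Type*} [L.Structure M]

lemma realize_subst_elim {m m' : ℕ} (t : L.Term (α ⊕ Fin m)) (ρ : Fin m → L.Term (α ⊕ Fin m'))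
    (v : α → M) (xs : Fin m' → M) :
    (t.subst (Sum.elim (Term.var ∘ Sum.inl) ρ)).realize (Sum.elim v xs) =
      t.realize (Sum.elim v fun l => (ρ l).realize (Sum.elim v xs)) := by
  rw [Term.realize_subst]
  congr 1
  ext (a | l) <;> rfl

lemma realize_substBound : ∀ {m m' : ℕ} (φ : L.BoundedFormula α m)
    (ρ : Fin m → L.Term (α ⊕ Fin m')) (v : α → M) (xs : Fin m' → M),
    (substBound φ ρ).Realize v xs ↔ φ.Realize v fun l => (ρ l).realize (Sum.elim v xs)
  | _, _, .falsum, _, _, _ => Iff.rfl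
  | _, _, .equal t₁ t₂, ρ, v, xs => by
    simp only [substBound, BoundedFormula.Realize, realize_subst_elim]
  | _, _, .rel R ts, ρ, v, xs => by
    simp only [substBound, BoundedFormula.Realize, realize_subst_elim]
  | _, _, .imp φ ψ, ρ, v, xs => by
    simp only [substBound, BoundedFormula.realize_imp, realize_substBound φ, realize_substBound ψ]
  | _, _, .all φ, ρ, v, xs => by
    simp only [substBound, BoundedFormula.realize_all, realize_substBound φ]
    refine forall_congr' fun a => Eq.to_iff (congrArg _ (funext fun l => ?_))
    refine Fin.lastCases ?_ (fun l => ?_) l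
    · simp
    · simp only [Fin.snoc_castSucc, Term.realize_relabel]
      congr 1
      ext (b | j) <;> simp

variable {n : ℕ}

lemma qdepth_not (φ : L.BoundedFormula α n) : φ.not.qdepth = φ.qdepth := Nat.max_zero _

lemma qdepth_ex (φ : L.BoundedFormula α (n + 1)) : φ.ex.qdepth = φ.qdepth + 1 := by
  simp [BoundedFormula.qdepth]

lemma qdepth_foldr_inf_le (Φ : List (L.BoundedFormula α n)) {b : ℕ} (h : ∀ φ ∈ Φ, φ.qdepth ≤ b) :
    (Φ.foldr (· ⊓ ·) ⊤).qdepth ≤ b := by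
  induction Φ with
  | nil => exact Nat.zero_le _
  | cons φ Φ ih =>
    simp only [List.mem_cons, forall_eq_or_imp] at h
    change max (max φ.qdepth (max (Φ.foldr (· ⊓ ·) ⊤).qdepth 0)) 0 ≤ b
    have := ih h.2
    omega

noncomputable def pattern (Θ P : List (L.BoundedFormula α n)) : L.BoundedFormula α n :=
  (Θ.map fun θ => if θ ∈ P then θ else θ.not).foldr (· ⊓ ·) ⊤

lemma qdepth_pattern_le {Θ : List (L.BoundedFormula α n)} (P : List (L.BoundedFormula α n))
    {b : ℕ} (h : ∀ θ ∈ Θ, θ.qdepth ≤ b) : (pattern Θ P).qdepth ≤ b := by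
  refine qdepth_foldr_inf_le _ fun φ hφ => ?_
  obtain ⟨θ, hθ, rfl⟩ := List.mem_map.1 hφ
  split_ifs
  · exact h θ hθ
  · exact (qdepth_not θ).trans_le (h θ hθ)

lemma realize_pattern_iff {Θ P : List (L.BoundedFormula α n)} {v : α → M} {xs : Fin n → M} :
    (pattern Θ P).Realize v xs ↔ ∀ θ ∈ Θ, (θ.Realize v xs ↔ θ ∈ P) := by
  simp only [pattern, BoundedFormula.realize_foldr_inf, List.forall_mem_map]
  refine forall₂_congr fun θ _ => ?_
  split_ifs with hθ <;> simp [hθ]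

noncomputable def realizedPattern (Θ : List (L.BoundedFormula α n)) (v : α → M) (xs : Fin n → M) :
    List (L.BoundedFormula α n) :=
  Θ.filter fun θ => θ.Realize v xs

lemma realizedPattern_mem_sublists (Θ : List (L.BoundedFormula α n)) (v : α → M)
    (xs : Fin n → M) : realizedPattern Θ v xs ∈ Θ.sublists :=
  List.mem_sublists.2 List.filter_sublist

lemma realize_pattern_realizedPattern_iff {Θ : List (L.BoundedFormula α n)} {v : α → M}
    {xs : Fin n → M} {N : Type*} [L.Structure N] {v' : α → N} {xs' : Fin n → N} :
    (pattern Θ (realizedPattern Θ v xs)).Realize v' xs' ↔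
      ∀ θ ∈ Θ, (θ.Realize v xs ↔ θ.Realize v' xs') := by
  rw [realize_pattern_iff]
  refine forall₂_congr fun θ hθ => ?_
  simp [realizedPattern, hθ, Iff.comm]

lemma realize_pattern_realizedPattern (Θ : List (L.BoundedFormula α n)) (v : α → M)
    (xs : Fin n → M) : (pattern Θ (realizedPattern Θ v xs)).Realize v xs :=
  realize_pattern_realizedPattern_iff.2 fun _ _ => Iff.rfl

end FirstOrder.Language.BoundedFormula

namespace RTree

open FirstOrder Language BoundedFormula

section Vertices

variable {T : RTree}

def ancestor (T : RTree) (p : ℕ) (v : T.V) : T.V := (parentV T)^[p] v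

lemma ancestor_succ (p : ℕ) (v : T.V) : T.ancestor (p + 1) v = parentV T (T.ancestor p v) :=
  Function.iterate_succ_apply' _ _ _

lemma val_ancestor (p : ℕ) (v : T.V) : (T.ancestor p v).1 = v.1.take (v.1.length - p) := by
  induction p with
  | zero => simp [ancestor]
  | succ p ih =>
    rw [ancestor_succ]
    change (T.ancestor p v).1.dropLast = _
    rw [List.dropLast_eq_take, ih, List.length_take, List.take_take]
    congr 1
    omega

lemma take_mem_carrier (v : T.V) (m : ℕ) : v.1.take m ∈ T.carrier := by
  rcases le_or_gt m v.1.length with h | h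
  · simpa [val_ancestor, Nat.sub_sub_self h] using (T.ancestor (v.1.length - m) v).2
  · simpa [List.take_of_length_le h.le] using v.2

@[ext]
lemma V.ext {v w : T.V} (h : v.1 = w.1) : v = w := Subtype.ext h

lemma eq_rootV_iff {v : T.V} : v = rootV T ↔ v.1 = [] := Subtype.ext_iff

lemma ancestor_eq_rootV_iff {p : ℕ} {v : T.V} : T.ancestor p v = rootV T ↔ v.1.length ≤ p := by
  rw [eq_rootV_iff, val_ancestor, ← List.length_eq_zero_iff, List.length_take]
  omega

lemma ancestor_rootV (p : ℕ) : T.ancestor p (rootV T) = rootV T :=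
  ancestor_eq_rootV_iff.2 (by simp [rootV])

def branch (v : T.V) : Option ℕ := v.1.head?

lemma branch_eq_none_iff {v : T.V} : branch v = none ↔ v = rootV T := by
  rw [branch, List.head?_eq_none_iff, eq_rootV_iff]

lemma branch_rootV : branch (rootV T) = none := branch_eq_none_iff.2 rfl

lemma child_mem_of_branch_eq {v : T.V} {i : ℕ} (h : branch v = some i) : [i] ∈ T.carrier := by
  obtain ⟨t, ht⟩ := List.head?_eq_some_iff.1 h
  simpa [ht] using take_mem_carrier v 1

lemma branch_ancestor {p : ℕ} {v : T.V} (h : T.ancestor p v ≠ rootV T) :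
    branch (T.ancestor p v) = branch v := by
  rw [ne_eq, ancestor_eq_rootV_iff] at h
  rw [branch, branch, val_ancestor, List.head?_take, if_neg (by omega)]

section Branch

variable {i : ℕ} (hi : [i] ∈ T.carrier)

def ofBranch (w : (T.subtreeAt [i] hi).V) : T.V := ⟨i :: w.1, w.2⟩

/-- Vertices outside the subtree of the rootchild `i` are sent to its root. -/
noncomputable def toBranch (v : T.V) : (T.subtreeAt [i] hi).V :=
  if h : branch v = some i then
    ⟨v.1.tail, by
      obtain ⟨t, ht⟩ := List.head?_eq_some_iff.1 h
      simpa [subtreeAt, ht] using v.2⟩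
  else rootV _

variable {hi}

lemma val_ofBranch (w : (T.subtreeAt [i] hi).V) : (ofBranch hi w).1 = i :: w.1 := rfl

lemma branch_ofBranch (w : (T.subtreeAt [i] hi).V) : branch (ofBranch hi w) = some i := rfl

lemma ofBranch_injective : Function.Injective (ofBranch hi) := fun _ _ h =>
  Subtype.ext (List.cons_injective (congrArg Subtype.val h))

lemma val_toBranch {v : T.V} (h : branch v = some i) : (toBranch hi v).1 = v.1.tail := by
  simp [toBranch, h]

lemma toBranch_ofBranch (w : (T.subtreeAt [i] hi).V) : toBranch hi (ofBranch hi w) = w :=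
  V.ext (val_toBranch (branch_ofBranch w))

lemma ofBranch_toBranch {v : T.V} (h : branch v = some i) : ofBranch hi (toBranch hi v) = v := by
  obtain ⟨t, ht⟩ := List.head?_eq_some_iff.1 h
  ext1
  simp [ofBranch, val_toBranch h, ht]

lemma toBranch_of_branch_ne {v : T.V} (h : branch v ≠ some i) : toBranch hi v = rootV _ :=
  dif_neg h

lemma toBranch_rootV : toBranch hi (rootV T) = rootV _ :=
  toBranch_of_branch_ne (by simp [branch_rootV])

lemma ancestor_ofBranch {p : ℕ} {w : (T.subtreeAt [i] hi).V} (hp : p ≤ w.1.length) :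
    T.ancestor p (ofBranch hi w) = ofBranch hi ((T.subtreeAt [i] hi).ancestor p w) := by
  ext1
  simp only [val_ancestor, val_ofBranch, List.length_cons]
  rw [Nat.sub_add_comm hp, List.take_succ_cons]

lemma ancestor_succ_eq_rootV_iff_toBranch {v : T.V} (h : branch v = some i) {p : ℕ} :
    T.ancestor (p + 1) v = rootV T ↔
      (T.subtreeAt [i] hi).ancestor p (toBranch hi v) = rootV _ := by
  conv_lhs => rw [← ofBranch_toBranch (hi := hi) h]
  simp only [ancestor_eq_rootV_iff, val_ofBranch, List.length_cons]
  omega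

lemma ancestor_eq_ancestor_iff_toBranch {v v' : T.V} (h : branch v = some i)
    (h' : branch v' = some i) {p q : ℕ} (hp : T.ancestor p v ≠ rootV T) (hq : T.ancestor q v' ≠ rootV T) :
    T.ancestor p v = T.ancestor q v' ↔
      (T.subtreeAt [i] hi).ancestor p (toBranch hi v) =
        (T.subtreeAt [i] hi).ancestor q (toBranch hi v') := by
  obtain ⟨w, rfl⟩ : ∃ w, ofBranch hi w = v := ⟨_, ofBranch_toBranch h⟩
  obtain ⟨w', rfl⟩ : ∃ w', ofBranch hi w' = v' := ⟨_, ofBranch_toBranch h'⟩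
  rw [ne_eq, ancestor_eq_rootV_iff] at hp hq
  simp only [val_ofBranch, List.length_cons] at hp hq
  rw [ancestor_ofBranch (by omega), ancestor_ofBranch (by omega), ofBranch_injective.eq_iff,
    toBranch_ofBranch, toBranch_ofBranch]

end Branch

end Vertices

section Formulas

variable {T : RTree} {n : ℕ}

def rootTerm {α : Type*} : treeLang.Term α :=
  Term.func (l := 0) (show treeLang.Functions 0 from ()) Fin.elim0

def parentTerm {α : Type*} : ℕ → treeLang.Term α → treeLang.Term α
  | 0, t => t
  | p + 1, t => Term.func (l := 1) (show treeLang.Functions 1 from ()) fun _ => parentTerm p t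

lemma realize_rootTerm {α : Type*} (v : α → T.V) :
    (rootTerm : treeLang.Term α).realize v = rootV T :=
  rfl

lemma realize_parentTerm {α : Type*} (v : α → T.V) (p : ℕ) (t : treeLang.Term α) :
    (parentTerm p t).realize v = T.ancestor p (t.realize v) := by
  induction p with
  | zero => rfl
  | succ p ih => exact (congrArg (parentV T) ih).trans (ancestor_succ p _).symm

lemma term_cases (t : treeLang.Term (Empty ⊕ Fin n)) :
    (∀ (U : RTree) (xs : Fin n → U.V), t.realize (Sum.elim default xs) = rootV U) ∨
    ∃ (p : ℕ) (l : Fin n), ∀ (U : RTree) (xs : Fin n → U.V),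
      t.realize (Sum.elim default xs) = U.ancestor p (xs l) := by
  induction t with
  | var a =>
    rcases a with e | l
    · exact e.elim
    · exact Or.inr ⟨0, l, fun _ _ => rfl⟩
  | @func m f ts ih =>
    match m, f, ts, ih with
    | 0, _, _, _ => exact Or.inl fun _ _ => rfl
    | 1, _, ts, ih =>
      rcases ih 0 with h | ⟨p, l, h⟩
      · refine Or.inl fun U xs => ?_
        change parentV U ((ts 0).realize _) = _
        rw [h, ← ancestor_rootV 1]
        rfl
      · exact Or.inr ⟨p + 1, l, fun U xs => (congrArg (parentV U) (h U xs)).trans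
          (ancestor_succ p _).symm⟩
    | _ + 2, f, _, _ => exact (show Empty from f).elim

def ancestorEq (p q : ℕ) (l l' : Fin n) : treeLang.BoundedFormula Empty n :=
  (parentTerm p (Term.var (Sum.inr l))).bdEqual (parentTerm q (Term.var (Sum.inr l')))

def ancestorIsRoot (p : ℕ) (l : Fin n) : treeLang.BoundedFormula Empty n :=
  (parentTerm p (Term.var (Sum.inr l))).bdEqual rootTerm

lemma realize_ancestorEq {p q : ℕ} {l l' : Fin n} {v : Empty → T.V} {xs : Fin n → T.V} :
    (ancestorEq p q l l').Realize v xs ↔ T.ancestor p (xs l) = T.ancestor q (xs l') := by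
  simp only [ancestorEq, BoundedFormula.realize_bdEqual, realize_parentTerm]
  rfl

lemma realize_ancestorIsRoot {p : ℕ} {l : Fin n} {v : Empty → T.V} {xs : Fin n → T.V} :
    (ancestorIsRoot p l).Realize v xs ↔ T.ancestor p (xs l) = rootV T := by
  simp only [ancestorIsRoot, BoundedFormula.realize_bdEqual, realize_parentTerm]
  rfl

def substLastRoot (θ : treeLang.BoundedFormula Empty (n + 1)) : treeLang.BoundedFormula Empty n :=
  substBound θ (Fin.snoc (fun l => Term.var (Sum.inr l)) rootTerm)

def substInitRoot (θ : treeLang.BoundedFormula Empty (n + 1)) : treeLang.BoundedFormula Empty 1 :=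
  substBound θ (Fin.snoc (fun _ => rootTerm) (Term.var (Sum.inr 0)))

def liftSentence (ξ : treeLang.Sentence) : treeLang.BoundedFormula Empty n :=
  substBound ξ Fin.elim0

lemma realize_substLastRoot {θ : treeLang.BoundedFormula Empty (n + 1)} {v : Empty → T.V}
    {xs : Fin n → T.V} : (substLastRoot θ).Realize v xs ↔ θ.Realize v (Fin.snoc xs (rootV T)) := by
  rw [substLastRoot, realize_substBound]
  refine Eq.to_iff (congrArg _ (funext fun l => Fin.lastCases ?_ (fun l => ?_) l)) <;>
    simp [realize_rootTerm]

lemma realize_substInitRoot {θ : treeLang.BoundedFormula Empty (n + 1)} {v : Empty → T.V}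
    {xs : Fin 1 → T.V} :
    (substInitRoot θ).Realize v xs ↔ θ.Realize v (Fin.snoc (fun _ => rootV T) (xs 0)) := by
  rw [substInitRoot, realize_substBound]
  refine Eq.to_iff (congrArg _ (funext fun l => Fin.lastCases ?_ (fun l => ?_) l)) <;>
    simp [realize_rootTerm]

lemma realize_sentence_iff {ξ : treeLang.Sentence} {v : Empty → T.V} {xs : Fin 0 → T.V} :
    (T.V ⊨ ξ) ↔ BoundedFormula.Realize ξ v xs := by
  rw [Subsingleton.elim v default, Subsingleton.elim xs default]
  rfl

lemma realize_liftSentence {ξ : treeLang.Sentence} {v : Empty → T.V} {xs : Fin n → T.V} :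
    (liftSentence ξ : treeLang.BoundedFormula Empty n).Realize v xs ↔ (T.V ⊨ ξ) := by
  rw [liftSentence, realize_substBound, ← realize_sentence_iff]

end Formulas

section Simulation

variable {T T' : RTree} {n : ℕ}

def freshSet (T : RTree) (ms : List ℕ) (ξ : treeLang.Sentence) : Set ℕ :=
  {i | i ∉ ms ∧ ∃ hi : [i] ∈ T.carrier, (T.subtreeAt [i] hi).V ⊨ ξ}

lemma freshSet_cons (i : ℕ) (ms : List ℕ) (ξ : treeLang.Sentence) :
    freshSet T (i :: ms) ξ = freshSet T ms ξ \ {i} := by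
  ext j
  simp only [freshSet, List.mem_cons, not_or, Set.mem_sdiff, Set.mem_ofPred_eq,
    Set.mem_singleton_iff]
  tauto

structure SimWitness (Θ : List (treeLang.BoundedFormula Empty n))
    (Ξ : List (treeLang.Sentence × ℕ)) (f : Fin n → T.V) (g : Fin n → T'.V)
    (M : List (ℕ × ℕ)) : Prop where
  child_mem : ∀ p ∈ M, [p.1] ∈ T.carrier ∧ [p.2] ∈ T'.carrier
  nodup_fst : (M.map Prod.fst).Nodup
  nodup_snd : (M.map Prod.snd).Nodup
  branch_rel : ∀ l, Option.Rel (fun i j => (i, j) ∈ M) (branch (f l)) (branch (g l))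
  local_iff : ∀ p ∈ M, ∀ (h₁ : [p.1] ∈ T.carrier) (h₂ : [p.2] ∈ T'.carrier), ∀ θ ∈ Θ,
    θ.Realize default (toBranch h₁ ∘ f) ↔ θ.Realize default (toBranch h₂ ∘ g)
  count_iff : ∀ q ∈ Ξ, (q.2 : ℕ∞) ≤ (freshSet T (M.map Prod.fst) q.1).encard ↔
    (q.2 : ℕ∞) ≤ (freshSet T' (M.map Prod.snd) q.1).encard

def Sim (Θ : List (treeLang.BoundedFormula Empty n)) (Ξ : List (treeLang.Sentence × ℕ))
    (f : Fin n → T.V) (g : Fin n → T'.V) : Prop :=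
  ∃ M, SimWitness Θ Ξ f g M

variable {Θ : List (treeLang.BoundedFormula Empty n)} {Ξ : List (treeLang.Sentence × ℕ)}
  {f : Fin n → T.V} {g : Fin n → T'.V} {M : List (ℕ × ℕ)}

lemma SimWitness.mono (hM : SimWitness Θ Ξ f g M) {Θ' : List (treeLang.BoundedFormula Empty n)}
    {Ξ' : List (treeLang.Sentence × ℕ)} (hΘ : Θ' ⊆ Θ) (hΞ : Ξ' ⊆ Ξ) :
    SimWitness Θ' Ξ' f g M where
  __ := hM
  local_iff p hp h₁ h₂ θ hθ := hM.local_iff p hp h₁ h₂ θ (hΘ hθ)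
  count_iff q hq := hM.count_iff q (hΞ hq)

lemma SimWitness.symm (hM : SimWitness Θ Ξ f g M) : SimWitness Θ Ξ g f (M.map Prod.swap) := by
  have hfst : (M.map Prod.swap).map Prod.fst = M.map Prod.snd := by simp
  have hsnd : (M.map Prod.swap).map Prod.snd = M.map Prod.fst := by simp
  refine ⟨fun p hp => ?_, hfst ▸ hM.nodup_snd, hsnd ▸ hM.nodup_fst, fun l => ?_,
    fun p hp h₁ h₂ θ hθ => ?_, fun q hq => hfst ▸ hsnd ▸ (hM.count_iff q hq).symm⟩
  · obtain ⟨p', hp', rfl⟩ := List.mem_map.1 hp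
    exact (hM.child_mem p' hp').symm
  · exact (hM.branch_rel l).flip.mono fun i j h => List.mem_map.2 ⟨(j, i), h, rfl⟩
  · obtain ⟨p', hp', rfl⟩ := List.mem_map.1 hp
    exact (hM.local_iff p' hp' h₂ h₁ θ hθ).symm

lemma Sim.mono (hs : Sim Θ Ξ f g) {Θ' : List (treeLang.BoundedFormula Empty n)}
    {Ξ' : List (treeLang.Sentence × ℕ)} (hΘ : Θ' ⊆ Θ) (hΞ : Ξ' ⊆ Ξ) : Sim Θ' Ξ' f g :=
  hs.imp fun _ hM => hM.mono hΘ hΞ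

lemma Sim.symm (hs : Sim Θ Ξ f g) : Sim Θ Ξ g f :=
  let ⟨_, hM⟩ := hs
  ⟨_, hM.symm⟩

lemma SimWitness.eq_rootV_iff (hM : SimWitness Θ Ξ f g M) (l : Fin n) :
    f l = rootV T ↔ g l = rootV T' := by
  rw [← branch_eq_none_iff, ← branch_eq_none_iff]
  exact (hM.branch_rel l).eq_none_iff

lemma SimWitness.exists_of_ne_rootV (hM : SimWitness Θ Ξ f g M) {l : Fin n}
    (h : f l ≠ rootV T) : ∃ p ∈ M, branch (f l) = some p.1 ∧ branch (g l) = some p.2 := by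
  obtain ⟨i, hi⟩ := Option.ne_none_iff_exists'.1 (mt branch_eq_none_iff.1 h)
  obtain ⟨j, hj, hij⟩ := (hi ▸ hM.branch_rel l).exists_of_some_left
  exact ⟨(i, j), hij, hi, hj⟩

lemma SimWitness.toBranch_comp_eq_rootV (hM : SimWitness Θ Ξ f g M) {i : ℕ}
    (hi : [i] ∈ T.carrier) (hfresh : i ∉ M.map Prod.fst) :
    toBranch hi ∘ f = fun _ => rootV _ := by
  funext l
  refine toBranch_of_branch_ne fun h => hfresh ?_
  obtain ⟨j, -, hq⟩ := (h ▸ hM.branch_rel l).exists_of_some_left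
  exact List.mem_map.2 ⟨_, hq, rfl⟩

end Simulation

section Extension

variable {T T' : RTree} {n : ℕ} {Θ : List (treeLang.BoundedFormula Empty (n + 1))}
  {Ξ : List (treeLang.Sentence × ℕ)} {f : Fin n → T.V} {g : Fin n → T'.V} {M : List (ℕ × ℕ)}

noncomputable def extLocal (Θ : List (treeLang.BoundedFormula Empty (n + 1))) :
    List (treeLang.BoundedFormula Empty n) :=
  Θ.map substLastRoot ++ Θ.sublists.map fun P => (pattern Θ P).ex

/-- Raising each threshold of `Ξ` by one keeps the counting conditions valid after a newly
matched pair of branches is removed from the unmatched ones. -/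
noncomputable def extCount (Θ : List (treeLang.BoundedFormula Empty (n + 1)))
    (Ξ : List (treeLang.Sentence × ℕ)) : List (treeLang.Sentence × ℕ) :=
  Ξ ++ Ξ.map (fun q => (q.1, q.2 + 1)) ++
    Θ.sublists.map fun P => ((substInitRoot (pattern Θ P)).ex, 1)

lemma substLastRoot_mem_extLocal {θ : treeLang.BoundedFormula Empty (n + 1)} (hθ : θ ∈ Θ) :
    substLastRoot θ ∈ extLocal Θ :=
  List.mem_append_left _ (List.mem_map_of_mem hθ)

lemma ex_pattern_mem_extLocal {P : List (treeLang.BoundedFormula Empty (n + 1))}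
    (hP : P ∈ Θ.sublists) : (pattern Θ P).ex ∈ extLocal Θ :=
  List.mem_append_right _ (List.mem_map_of_mem hP)

lemma subset_extCount : Ξ ⊆ extCount Θ Ξ :=
  fun _ hq => List.mem_append_left _ (List.mem_append_left _ hq)

lemma succ_mem_extCount {q : treeLang.Sentence × ℕ} (hq : q ∈ Ξ) :
    (q.1, q.2 + 1) ∈ extCount Θ Ξ :=
  List.mem_append_left _ (List.mem_append_right _ (List.mem_map_of_mem hq))

lemma ex_substInitRoot_mem_extCount {P : List (treeLang.BoundedFormula Empty (n + 1))}
    (hP : P ∈ Θ.sublists) : ((substInitRoot (pattern Θ P)).ex, 1) ∈ extCount Θ Ξ :=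
  List.mem_append_right _ (List.mem_map_of_mem hP)

lemma qdepth_le_of_mem_extLocal {b : ℕ} (hΘ : ∀ θ ∈ Θ, θ.qdepth ≤ b) :
    ∀ θ ∈ extLocal Θ, θ.qdepth ≤ b + 1 := by
  simp only [extLocal, List.mem_append, List.mem_map]
  rintro _ (⟨θ, hθ, rfl⟩ | ⟨P, -, rfl⟩)
  · rw [substLastRoot, qdepth_substBound]
    exact (hΘ θ hθ).trans b.le_succ
  · rw [qdepth_ex]
    exact Nat.succ_le_succ (qdepth_pattern_le P hΘ)

lemma qdepth_le_of_mem_extCount {b : ℕ} (hΘ : ∀ θ ∈ Θ, θ.qdepth ≤ b)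
    (hΞ : ∀ q ∈ Ξ, q.1.qdepth ≤ b ∧ q.2 ≤ b) :
    ∀ q ∈ extCount Θ Ξ, q.1.qdepth ≤ b + 1 ∧ q.2 ≤ b + 1 := by
  simp only [extCount, List.mem_append, List.mem_map]
  rintro _ ((hq | ⟨q, hq, rfl⟩) | ⟨P, -, rfl⟩)
  · exact ⟨(hΞ _ hq).1.trans b.le_succ, (hΞ _ hq).2.trans b.le_succ⟩
  · exact ⟨(hΞ q hq).1.trans b.le_succ, Nat.succ_le_succ (hΞ q hq).2⟩
  · rw [qdepth_ex, substInitRoot, qdepth_substBound]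
    exact ⟨Nat.succ_le_succ (qdepth_pattern_le P hΘ), Nat.succ_le_succ b.zero_le⟩

lemma SimWitness.local_iff_snoc_of_eq_rootV {Ξ' : List (treeLang.Sentence × ℕ)}
    (hM : SimWitness (extLocal Θ) Ξ' f g M) {p : ℕ × ℕ} (hp : p ∈ M)
    (h₁ : [p.1] ∈ T.carrier) (h₂ : [p.2] ∈ T'.carrier) {x : T.V} {y : T'.V}
    (hx : toBranch h₁ x = rootV _) (hy : toBranch h₂ y = rootV _)
    {θ : treeLang.BoundedFormula Empty (n + 1)} (hθ : θ ∈ Θ) :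
    θ.Realize default (toBranch h₁ ∘ Fin.snoc f x) ↔
      θ.Realize default (toBranch h₂ ∘ Fin.snoc g y) := by
  rw [Fin.comp_snoc, Fin.comp_snoc, hx, hy, ← realize_substLastRoot, ← realize_substLastRoot]
  exact hM.local_iff p hp h₁ h₂ _ (substLastRoot_mem_extLocal hθ)

lemma SimWitness.snoc_rootV (hM : SimWitness (extLocal Θ) (extCount Θ Ξ) f g M) :
    SimWitness Θ Ξ (Fin.snoc f (rootV T)) (Fin.snoc g (rootV T')) M where
  child_mem := hM.child_mem
  nodup_fst := hM.nodup_fst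
  nodup_snd := hM.nodup_snd
  branch_rel := Fin.forall_fin_succ'.2
    ⟨by simpa using hM.branch_rel, by simp only [Fin.snoc_last, branch_rootV]; exact .none⟩
  local_iff _ hp h₁ h₂ _ hθ :=
    hM.local_iff_snoc_of_eq_rootV hp h₁ h₂ toBranch_rootV toBranch_rootV hθ
  count_iff q hq := hM.count_iff q (subset_extCount hq)

lemma SimWitness.exists_snoc_of_mem (hM : SimWitness (extLocal Θ) (extCount Θ Ξ) f g M)
    {p₀ : ℕ × ℕ} (hp₀ : p₀ ∈ M) {x : T.V} (hx : branch x = some p₀.1) :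
    ∃ y, SimWitness Θ Ξ (Fin.snoc f x) (Fin.snoc g y) M := by
  obtain ⟨h₁, h₂⟩ := hM.child_mem p₀ hp₀
  set P := realizedPattern Θ default (Fin.snoc (toBranch h₁ ∘ f) (toBranch h₁ x))
  have hP : (pattern Θ P).ex.Realize default (toBranch h₂ ∘ g) :=
    (hM.local_iff p₀ hp₀ h₁ h₂ _ (ex_pattern_mem_extLocal (realizedPattern_mem_sublists ..))).1
      (BoundedFormula.realize_ex.2 ⟨_, realize_pattern_realizedPattern ..⟩)
  obtain ⟨w, hw⟩ := BoundedFormula.realize_ex.1 hP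
  refine ⟨ofBranch h₂ w, hM.child_mem, hM.nodup_fst, hM.nodup_snd,
    Fin.forall_fin_succ'.2 ⟨by simpa using hM.branch_rel, ?_⟩,
    fun p hp h₁' h₂' θ hθ => ?_, fun q hq => hM.count_iff q (subset_extCount hq)⟩
  · simp only [Fin.snoc_last, hx, branch_ofBranch]
    exact .some hp₀
  rcases eq_or_ne p p₀ with rfl | hne
  · rw [Fin.comp_snoc, Fin.comp_snoc, toBranch_ofBranch]
    exact realize_pattern_realizedPattern_iff.1 hw θ hθ
  refine hM.local_iff_snoc_of_eq_rootV hp h₁' h₂' (toBranch_of_branch_ne ?_)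
    (toBranch_of_branch_ne ?_) hθ
  · rw [hx, ne_eq, Option.some_inj]
    exact fun h => hne (List.inj_on_of_nodup_map hM.nodup_fst hp hp₀ h.symm)
  · rw [branch_ofBranch, ne_eq, Option.some_inj]
    exact fun h => hne (List.inj_on_of_nodup_map hM.nodup_snd hp hp₀ h.symm)

lemma SimWitness.exists_fresh_partner (hM : SimWitness (extLocal Θ) (extCount Θ Ξ) f g M)
    {i : ℕ} (hi : [i] ∈ T.carrier) (hfresh : i ∉ M.map Prod.fst) (u : (T.subtreeAt [i] hi).V) :
    ∃ j ∉ M.map Prod.snd, ∃ (hj : [j] ∈ T'.carrier) (w : (T'.subtreeAt [j] hj).V), ∀ θ ∈ Θ,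
      (θ.Realize default (Fin.snoc (fun _ => rootV _) u) ↔
        θ.Realize default (Fin.snoc (fun _ => rootV _) w)) := by
  set P := realizedPattern Θ default (Fin.snoc (fun _ => rootV _) u)
  have hσ : (T.subtreeAt [i] hi).V ⊨ (substInitRoot (pattern Θ P)).ex := by
    rw [realize_sentence_iff (v := default) (xs := default), BoundedFormula.realize_ex]
    exact ⟨u, realize_substInitRoot.2 (realize_pattern_realizedPattern ..)⟩
  have hcount := (hM.count_iff _ (ex_substInitRoot_mem_extCount
    (realizedPattern_mem_sublists ..))).1 (by simpa using ⟨i, hfresh, hi, hσ⟩)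
  obtain ⟨j, hjfresh, hj, hσ'⟩ := Set.one_le_encard_iff_nonempty.1 (by simpa using hcount)
  rw [realize_sentence_iff (v := default) (xs := default), BoundedFormula.realize_ex] at hσ'
  obtain ⟨w, hw⟩ := hσ'
  exact ⟨j, hjfresh, hj, _, realize_pattern_realizedPattern_iff.1 (realize_substInitRoot.1 hw)⟩

lemma SimWitness.exists_snoc_of_fresh (hlift : ∀ q ∈ Ξ, liftSentence q.1 ∈ Θ)
    (hM : SimWitness (extLocal Θ) (extCount Θ Ξ) f g M) {x : T.V} {i : ℕ}
    (hx : branch x = some i) (hfresh : i ∉ M.map Prod.fst) :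
    ∃ y j, SimWitness Θ Ξ (Fin.snoc f x) (Fin.snoc g y) ((i, j) :: M) := by
  have hi := child_mem_of_branch_eq hx
  obtain ⟨j, hjfresh, hj, w, hagree⟩ := hM.exists_fresh_partner hi hfresh (toBranch hi x)
  have hf := hM.toBranch_comp_eq_rootV hi hfresh
  have hg : toBranch hj ∘ g = fun _ => rootV _ :=
    hM.symm.toBranch_comp_eq_rootV hj (by simpa using hjfresh)
  have hsat : ∀ q ∈ Ξ, i ∈ freshSet T (M.map Prod.fst) q.1 ↔ j ∈ freshSet T' (M.map Prod.snd) q.1 :=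
    fun q hq => by
      have h := hagree _ (hlift q hq)
      simp only [realize_liftSentence] at h
      exact and_congr (iff_of_true hfresh hjfresh)
        ⟨fun ⟨_, hsat⟩ => ⟨hj, h.1 hsat⟩, fun ⟨_, hsat⟩ => ⟨hi, h.2 hsat⟩⟩
  refine ⟨ofBranch hj w, j, List.forall_mem_cons.2 ⟨⟨hi, hj⟩, hM.child_mem⟩,
    List.nodup_cons.2 ⟨hfresh, hM.nodup_fst⟩, List.nodup_cons.2 ⟨hjfresh, hM.nodup_snd⟩,
    Fin.forall_fin_succ'.2 ⟨fun l => ?_, ?_⟩, fun p hp h₁ h₂ θ hθ => ?_, fun q hq => ?_⟩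
  · simpa only [Fin.snoc_castSucc] using
      (hM.branch_rel l).mono fun _ _ h => List.mem_cons_of_mem (i, j) h
  · simp only [Fin.snoc_last, hx, branch_ofBranch]
    exact .some List.mem_cons_self
  · rcases List.mem_cons.1 hp with rfl | hp
    · rw [Fin.comp_snoc, Fin.comp_snoc, hf, hg, toBranch_ofBranch]
      exact hagree θ hθ
    refine hM.local_iff_snoc_of_eq_rootV hp h₁ h₂ (toBranch_of_branch_ne ?_)
      (toBranch_of_branch_ne ?_) hθ
    · rw [hx, ne_eq, Option.some_inj]
      exact fun h => hfresh (h ▸ List.mem_map_of_mem hp)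
    · rw [branch_ofBranch, ne_eq, Option.some_inj]
      exact fun h => hjfresh (h ▸ List.mem_map_of_mem hp)
  · simp only [List.map_cons, freshSet_cons]
    exact Set.le_encard_sdiff_singleton_iff (hsat q hq) (hM.count_iff q (subset_extCount hq))
      (by simpa using hM.count_iff _ (succ_mem_extCount hq))

lemma Sim.exists_snoc (hlift : ∀ q ∈ Ξ, liftSentence q.1 ∈ Θ)
    (hs : Sim (extLocal Θ) (extCount Θ Ξ) f g) (x : T.V) :
    ∃ y, Sim Θ Ξ (Fin.snoc f x) (Fin.snoc g y) := by
  obtain ⟨M, hM⟩ := hs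
  rcases hb : branch x with _ | i
  · rw [branch_eq_none_iff.1 hb]
    exact ⟨_, _, hM.snoc_rootV⟩
  by_cases hi : i ∈ M.map Prod.fst
  · obtain ⟨p, hp, rfl⟩ := List.mem_map.1 hi
    obtain ⟨y, hy⟩ := hM.exists_snoc_of_mem hp hb
    exact ⟨y, _, hy⟩
  · obtain ⟨y, j, hy⟩ := hM.exists_snoc_of_fresh hlift hb hi
    exact ⟨y, _, hy⟩

end Extension

section Atomic

variable {T T' : RTree} {n : ℕ} {Θ : List (treeLang.BoundedFormula Empty n)}
  {Ξ : List (treeLang.Sentence × ℕ)} {f : Fin n → T.V} {g : Fin n → T'.V} {M : List (ℕ × ℕ)}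

lemma SimWitness.ancestor_eq_rootV_iff (hM : SimWitness Θ Ξ f g M) {p : ℕ} {l : Fin n}
    (hΘ : ancestorIsRoot (p - 1) l ∈ Θ) :
    T.ancestor p (f l) = rootV T ↔ T'.ancestor p (g l) = rootV T' := by
  cases p with
  | zero => exact hM.eq_rootV_iff l
  | succ a =>
    by_cases hf : f l = rootV T
    · simp only [hf, (hM.eq_rootV_iff l).1 hf, ancestor_rootV]
    obtain ⟨p, hp, hfp, hgp⟩ := hM.exists_of_ne_rootV hf
    obtain ⟨h₁, h₂⟩ := hM.child_mem p hp
    rw [ancestor_succ_eq_rootV_iff_toBranch (hi := h₁) hfp,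
      ancestor_succ_eq_rootV_iff_toBranch (hi := h₂) hgp]
    exact realize_ancestorIsRoot.symm.trans
      ((hM.local_iff p hp h₁ h₂ _ hΘ).trans realize_ancestorIsRoot)

lemma SimWitness.ancestor_eq_ancestor_iff (hM : SimWitness Θ Ξ f g M) {p q : ℕ} {l l' : Fin n}
    (hΘ : ancestorEq p q l l' ∈ Θ) (hp : ancestorIsRoot (p - 1) l ∈ Θ)
    (hq : ancestorIsRoot (q - 1) l' ∈ Θ) :
    T.ancestor p (f l) = T.ancestor q (f l') ↔ T'.ancestor p (g l) = T'.ancestor q (g l') := by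
  have hrp := hM.ancestor_eq_rootV_iff hp
  have hrq := hM.ancestor_eq_rootV_iff hq
  by_cases h₁ : T.ancestor p (f l) = rootV T
  · rw [h₁, hrp.1 h₁, eq_comm, hrq, eq_comm]
  by_cases h₂ : T.ancestor q (f l') = rootV T
  · rw [h₂, hrq.1 h₂, hrp]
  have h₁' : T'.ancestor p (g l) ≠ rootV T' := mt hrp.2 h₁
  have h₂' : T'.ancestor q (g l') ≠ rootV T' := mt hrq.2 h₂
  obtain ⟨r, hr, hfr, hgr⟩ :=
    hM.exists_of_ne_rootV fun h => h₁ (by rw [h, ancestor_rootV])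
  obtain ⟨r', hr', hfr', hgr'⟩ :=
    hM.exists_of_ne_rootV fun h => h₂ (by rw [h, ancestor_rootV])
  by_cases hrr : r = r'
  · subst hrr
    obtain ⟨hi, hj⟩ := hM.child_mem r hr
    rw [ancestor_eq_ancestor_iff_toBranch (hi := hi) hfr hfr' h₁ h₂,
      ancestor_eq_ancestor_iff_toBranch (hi := hj) hgr hgr' h₁' h₂']
    exact realize_ancestorEq.symm.trans ((hM.local_iff r hr hi hj _ hΘ).trans realize_ancestorEq)
  -- the ancestors lie in distinct matched branches, on both sides
  refine iff_of_false (fun h => hrr ?_) (fun h => hrr ?_)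
  · refine List.inj_on_of_nodup_map hM.nodup_fst hr hr' (Option.some_injective _ ?_)
    rw [← hfr, ← hfr', ← branch_ancestor h₁, ← branch_ancestor h₂, h]
  · refine List.inj_on_of_nodup_map hM.nodup_snd hr hr' (Option.some_injective _ ?_)
    rw [← hgr, ← hgr', ← branch_ancestor h₁', ← branch_ancestor h₂', h]

end Atomic

section Decides

variable {n : ℕ}

structure Decides (φ : treeLang.BoundedFormula Empty n) (Θ : List (treeLang.BoundedFormula Empty n))
    (Ξ : List (treeLang.Sentence × ℕ)) : Prop where
  qdepth_local : ∀ θ ∈ Θ, θ.qdepth ≤ φ.qdepth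
  qdepth_count : ∀ q ∈ Ξ, q.1.qdepth ≤ φ.qdepth ∧ q.2 ≤ φ.qdepth
  realize_iff : ∀ {T T' : RTree} (f : Fin n → T.V) (g : Fin n → T'.V), Sim Θ Ξ f g →
    (φ.Realize default f ↔ φ.Realize default g)

lemma exists_decides_equal (t₁ t₂ : treeLang.Term (Empty ⊕ Fin n)) :
    ∃ Θ, Decides (.equal t₁ t₂) Θ [] := by
  rcases term_cases t₁ with h₁ | ⟨p, l, h₁⟩ <;> rcases term_cases t₂ with h₂ | ⟨q, l', h₂⟩
  · exact ⟨[], ⟨by simp, by simp, fun f g _ => by simp only [BoundedFormula.Realize, h₁, h₂]⟩⟩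
  · refine ⟨[ancestorIsRoot (q - 1) l'], ⟨by simp [ancestorIsRoot, Term.bdEqual,
      BoundedFormula.qdepth], by simp, fun f g ⟨M, hM⟩ => ?_⟩⟩
    simp only [BoundedFormula.Realize, h₁, h₂]
    rw [eq_comm, eq_comm (a := rootV _)]
    exact hM.ancestor_eq_rootV_iff (by simp)
  · refine ⟨[ancestorIsRoot (p - 1) l], ⟨by simp [ancestorIsRoot, Term.bdEqual,
      BoundedFormula.qdepth], by simp, fun f g ⟨M, hM⟩ => ?_⟩⟩
    simp only [BoundedFormula.Realize, h₁, h₂]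
    exact hM.ancestor_eq_rootV_iff (by simp)
  · refine ⟨[ancestorEq p q l l', ancestorIsRoot (p - 1) l, ancestorIsRoot (q - 1) l'],
      ⟨by simp [ancestorEq, ancestorIsRoot, Term.bdEqual, BoundedFormula.qdepth], by simp,
        fun f g ⟨M, hM⟩ => ?_⟩⟩
    simp only [BoundedFormula.Realize, h₁, h₂]
    exact hM.ancestor_eq_ancestor_iff (by simp) (by simp) (by simp)

variable {φ ψ : treeLang.BoundedFormula Empty n}

lemma Decides.imp {Θ₁ Θ₂ : List (treeLang.BoundedFormula Empty n)}
    {Ξ₁ Ξ₂ : List (treeLang.Sentence × ℕ)} (h₁ : Decides φ Θ₁ Ξ₁) (h₂ : Decides ψ Θ₂ Ξ₂) :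
    Decides (φ.imp ψ) (Θ₁ ++ Θ₂) (Ξ₁ ++ Ξ₂) where
  qdepth_local θ hθ := by
    rcases List.mem_append.1 hθ with hθ | hθ
    · exact (h₁.qdepth_local θ hθ).trans (le_max_left _ _)
    · exact (h₂.qdepth_local θ hθ).trans (le_max_right _ _)
  qdepth_count q hq := by
    rcases List.mem_append.1 hq with hq | hq
    · exact (h₁.qdepth_count q hq).imp (·.trans (le_max_left _ _)) (·.trans (le_max_left _ _))
    · exact (h₂.qdepth_count q hq).imp (·.trans (le_max_right _ _)) (·.trans (le_max_right _ _))
  realize_iff f g hs := by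
    simp only [BoundedFormula.realize_imp,
      h₁.realize_iff f g (hs.mono (List.subset_append_left _ _) (List.subset_append_left _ _)),
      h₂.realize_iff f g (hs.mono (List.subset_append_right _ _) (List.subset_append_right _ _))]

lemma Decides.all {ψ : treeLang.BoundedFormula Empty (n + 1)}
    {Θ : List (treeLang.BoundedFormula Empty (n + 1))} {Ξ : List (treeLang.Sentence × ℕ)}
    (h : Decides ψ Θ Ξ) :
    Decides ψ.all (extLocal (Θ ++ Ξ.map fun q => liftSentence q.1))
      (extCount (Θ ++ Ξ.map fun q => liftSentence q.1) Ξ) := by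
  set Θ' := Θ ++ Ξ.map fun q => liftSentence q.1
  have hΘ' : ∀ θ ∈ Θ', θ.qdepth ≤ ψ.qdepth := by
    simp only [Θ', List.mem_append, List.mem_map]
    rintro _ (hθ | ⟨q, hq, rfl⟩)
    · exact h.qdepth_local _ hθ
    · rw [liftSentence, qdepth_substBound]
      exact (h.qdepth_count q hq).1
  have hlift : ∀ q ∈ Ξ, liftSentence q.1 ∈ Θ' :=
    fun q hq => List.mem_append_right _ (List.mem_map_of_mem (f := fun q => liftSentence q.1) hq)
  have forall_of_forall : ∀ {T T' : RTree} (f : Fin n → T.V) (g : Fin n → T'.V),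
      Sim (extLocal Θ') (extCount Θ' Ξ) f g →
      (∀ x, ψ.Realize default (Fin.snoc f x)) → ∀ y, ψ.Realize default (Fin.snoc g y) := by
    intro T T' f g hs hf y
    obtain ⟨x, hx⟩ := hs.symm.exists_snoc hlift y
    have hsim := hx.symm.mono (List.subset_append_left _ _) (List.Subset.refl _)
    exact (h.realize_iff _ _ hsim).1 (hf x)
  refine ⟨qdepth_le_of_mem_extLocal hΘ', qdepth_le_of_mem_extCount hΘ' h.qdepth_count,
    fun f g hs => ?_⟩
  simp only [BoundedFormula.realize_all]
  exact ⟨forall_of_forall f g hs, forall_of_forall g f hs.symm⟩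

theorem exists_decides : ∀ {n : ℕ} (φ : treeLang.BoundedFormula Empty n), ∃ Θ Ξ, Decides φ Θ Ξ
  | _, .falsum => ⟨[], [], by simp, by simp, fun _ _ _ => Iff.rfl⟩
  | _, .equal t₁ t₂ => (exists_decides_equal t₁ t₂).imp fun _ h => ⟨[], h⟩
  | _, .rel R _ => (show Empty from R).elim
  | _, .imp φ ψ =>
    let ⟨_, _, hφ⟩ := exists_decides φ
    let ⟨_, _, hψ⟩ := exists_decides ψ
    ⟨_, _, hφ.imp hψ⟩
  | _, .all ψ =>
    let ⟨_, _, hψ⟩ := exists_decides ψ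
    ⟨_, _, hψ.all⟩

end Decides

section ChildClasses

variable {k : ℕ} {T T' : RTree}

lemma min_encard_eq_of_truncCount_eq {k : ℕ} {S S' : Set ℕ} (h : truncCount k S = truncCount k S') :
    min (k : ℕ∞) S.encard = min (k : ℕ∞) S'.encard := by
  have hne : ∀ a : ℕ∞, min (k : ℕ∞) a ≠ ⊤ :=
    fun a => ne_top_of_le_ne_top (ENat.natCast_ne_top k) (min_le_left _ _)
  rw [← ENat.natCast_toNat (hne S.encard), ← ENat.natCast_toNat (hne S'.encard)]
  exact congrArg Nat.cast h

noncomputable def childClass (k : ℕ) (T : RTree) (i : ℕ) : Option (TreeClass k) :=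
  if h : [i] ∈ T.carrier then some (EV k (T.subtreeAt [i] h)) else none

lemma childClass_eq_some_iff {i : ℕ} {j : TreeClass k} :
    childClass k T i = some j ↔ ∃ h : [i] ∈ T.carrier, EV k (T.subtreeAt [i] h) = j := by
  unfold childClass
  split_ifs with h <;> simp [h]

lemma realize_iff_of_EV_eq {S S' : RTree} (h : EV k S = EV k S') {ξ : treeLang.Sentence}
    (hξ : ξ.qdepth ≤ k) : (S.V ⊨ ξ) ↔ (S'.V ⊨ ξ) :=
  Quotient.exact h ξ hξ

lemma freshSet_nil_eq_preimage {ξ : treeLang.Sentence} (hξ : ξ.qdepth ≤ k) :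
    freshSet T [] ξ = childClass k T ⁻¹' {o | ∃ S : RTree, o = some (EV k S) ∧ S.V ⊨ ξ} := by
  ext i
  simp only [freshSet, List.not_mem_nil, not_false_eq_true, true_and, Set.mem_preimage,
    Set.mem_ofPred_eq]
  constructor
  · rintro ⟨hi, hsat⟩
    exact ⟨_, childClass_eq_some_iff.2 ⟨hi, rfl⟩, hsat⟩
  · rintro ⟨S, hS, hsat⟩
    obtain ⟨hi, hEV⟩ := childClass_eq_some_iff.1 hS
    exact ⟨hi, (realize_iff_of_EV_eq hEV hξ).2 hsat⟩

lemma le_encard_freshSet_nil_iff (h : ∀ j, childClassCount k T j = childClassCount k T' j)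
    {ξ : treeLang.Sentence} (hξ : ξ.qdepth ≤ k) {t : ℕ} (ht : t ≤ k) :
    (t : ℕ∞) ≤ (freshSet T [] ξ).encard ↔ (t : ℕ∞) ≤ (freshSet T' [] ξ).encard := by
  have hfiber : ∀ j : TreeClass k, min (k : ℕ∞) (childClass k T ⁻¹' {some j}).encard =
      min (k : ℕ∞) (childClass k T' ⁻¹' {some j}).encard := fun j => by
    simpa only [Set.preimage, Set.mem_singleton_iff, childClass_eq_some_iff] using
      min_encard_eq_of_truncCount_eq (h j)
  have hmin := Set.min_encard_preimage_eq (k := k)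
    (Q := {o | ∃ S : RTree, o = some (EV k S) ∧ S.V ⊨ ξ}) fun o ⟨S, hS, _⟩ => hS ▸ hfiber _
  have htk : (t : ℕ∞) ≤ k := Nat.cast_le.2 ht
  have hle := congrArg ((t : ℕ∞) ≤ ·) hmin
  simp only [le_min_iff, htk, true_and] at hle
  rw [freshSet_nil_eq_preimage hξ, freshSet_nil_eq_preimage hξ, hle]

lemma simWitness_nil {Θ : List (treeLang.BoundedFormula Empty 0)}
    {Ξ : List (treeLang.Sentence × ℕ)}
    (h : ∀ q ∈ Ξ, (q.2 : ℕ∞) ≤ (freshSet T [] q.1).encard ↔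
      (q.2 : ℕ∞) ≤ (freshSet T' [] q.1).encard) :
    SimWitness Θ Ξ (default : Fin 0 → T.V) (default : Fin 0 → T'.V) [] where
  child_mem := by simp
  nodup_fst := List.nodup_nil
  nodup_snd := List.nodup_nil
  branch_rel l := l.elim0
  local_iff := by simp
  count_iff := h

end ChildClasses

theorem ev_determined_by_rootchild_counts_general (k : ℕ) (T T' : RTree)
    (h : ∀ j : TreeClass k, childClassCount k T j = childClassCount k T' j) :
    TreeEquiv k T T' ∧ EV k T = EV k T' := by
  have hequiv : TreeEquiv k T T' := fun A hA => by
    obtain ⟨Θ, Ξ, hdec⟩ := exists_decides A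
    refine hdec.realize_iff default default ⟨[], simWitness_nil fun q hq => ?_⟩
    exact le_encard_freshSet_nil_iff h ((hdec.qdepth_count q hq).1.trans hA)
      ((hdec.qdepth_count q hq).2.trans hA)
  exact ⟨hequiv, Quotient.sound hequiv⟩

/-- **Theorem (the Ehrenfeucht value is determined by the rootchild classes).**
Fix a positive integer `k`.  If, for every class `j ∈ Σ_k`, the trees `T` and `T'` have
the same number `n_j ∈ C = {0, 1, …, k-1, ω}` of rootchildren `v` with `EV[T(v)] = j`
(the value `ω = k` meaning "at least `k`" and a value `n < k` meaning "exactly `n`"),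
then `T ≡_k T'`; consequently the Ehrenfeucht value `EV[T]` is uniquely determined by
the vector of truncated counts. -/
theorem ev_determined_by_rootchild_counts (k : ℕ) (hk : 0 < k) (T T' : RTree)
    (h : ∀ j : TreeClass k, childClassCount k T j = childClassCount k T' j) :
    TreeEquiv k T T' ∧ EV k T = EV k T' :=
  ev_determined_by_rootchild_counts_general k T T' h

end RTree
end

section
/- For every c with 0 < c < 1 and all x⃗, y⃗ ∈ D, TV(Ψ_c(x⃗), Ψ_c(y⃗)) ≤ c · TV(x⃗, y⃗). -/
open FirstOrder MeasureTheory
open scoped Classical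

namespace RTree

/-- Join a collection of rooted trees below a common new root. -/
def joinTree (f : ℕ → Option RTree) : RTree where
  carrier := {[]} ∪ {l | ∃ i T w, f i = some T ∧ w ∈ T.carrier ∧ l = i :: w}
  root_mem := Or.inl rfl
  dropLast_mem := by
    rintro v (rfl | ⟨i, T, w, hf, hw, rfl⟩)
    · exact Or.inl rfl
    · cases w with
      | nil => exact Or.inl (by simp)
      | cons a as =>
        exact Or.inr ⟨i, T, (a :: as).dropLast, hf, T.dropLast_mem _ hw, rfl⟩

/-- The recursion function `Γ`: given truncated counts `a j` of rootchildren of each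
Ehrenfeucht class `j` (counts `≥ k` being identified with `ω`), it returns the
Ehrenfeucht value of any (equivalently, of a canonical) tree whose root has, for each
`j`, `a j` rootchildren whose subtrees lie in class `j`. -/
noncomputable def recursionFun (k : ℕ) [Fintype (TreeClass k)]
    (a : TreeClass k → ℕ) : TreeClass k :=
  EV k (joinTree (fun n =>
    if h : n.unpair.1 < Fintype.card (TreeClass k) then
      if n.unpair.2 < min (a ((Fintype.equivFin (TreeClass k)).symm ⟨n.unpair.1, h⟩)) k then
        some (Quotient.out ((Fintype.equivFin (TreeClass k)).symm ⟨n.unpair.1, h⟩))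
      else none
    else none))

/-- `P[n = u]` for `n` a `Poisson(lam)` variable truncated at `ω = k`: for `u < k` this
is `e^{-lam} lam^u / u!`, and for `u = k` (representing `ω`) it is the remaining mass
`1 - Σ_{v<k} e^{-lam} lam^v / v!`. -/
noncomputable def poisTrunc (lam : ℝ) (k : ℕ) (u : ℕ) : ℝ :=
  if u < k then Real.exp (-lam) * lam ^ u / u.factorial
  else 1 - ∑ v ∈ Finset.range k, Real.exp (-lam) * lam ^ v / v.factorial

/-- The map `Ψ_c : D → D`: the root is given a `Poisson(c)` number of children, each
child independently receives a class `j` with probability `x j`; the (truncated) counts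
`n_j` are then independent (truncated) `Poisson(c x_j)` variables, and `Ψ_c(x) j` is the
probability that `Γ(n⃗) = j`. -/
noncomputable def PsiMap (k : ℕ) [Fintype (TreeClass k)] (c : ℝ)
    (x : TreeClass k → ℝ) : TreeClass k → ℝ := fun j =>
  ∑ a : TreeClass k → Fin (k + 1),
    (if recursionFun k (fun i => (a i : ℕ)) = j then ∏ i, poisTrunc (c * x i) k (a i)
     else 0)

/-- `D`: the simplex of probability distributions over `Σₖ`. -/
def simplexD (k : ℕ) [Fintype (TreeClass k)] : Set (TreeClass k → ℝ) :=
  {x | (∀ j, 0 ≤ x j) ∧ ∑ j, x j = 1}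

/-- The total variation distance `TV(x,y) = (1/2) Σ_j |x_j - y_j|`. -/
noncomputable def tvDist {ι : Type*} [Fintype ι] (x y : ι → ℝ) : ℝ :=
  (∑ j, |x j - y j|) / 2

/-- The Euclidean metric `ρ` on `ℝ^m`. -/
noncomputable def euclDist {ι : Type*} [Fintype ι] (x y : ι → ℝ) : ℝ :=
  Real.sqrt (∑ j, (x j - y j) ^ 2)

end RTree

/-!
The class counts `n⃗` are independent truncated `Poisson(c x_j)` variables, so `Ψ_c(x⃗)` is the
image under `Γ` of a product of truncated Poisson laws, and it suffices to couple the count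
vectors for `x⃗` and `y⃗` so that they differ with probability at most `c · TV(x⃗, y⃗)`.
Write `x = m + r`, `y = m + s` with `m = min x y`, so that `Σ r = Σ s = T = TV(x⃗, y⃗)`, and take
independent truncated Poisson variables `a_i` of rate `c m_i` and `b_ij` of rate `c r_i s_j / T`.
The vectors `(a_i + Σ_j b_ij)_i` and `(a_j + Σ_i b_ij)_j`, truncated at `k`, have the required
laws, since independent Poisson variables add (the multinomial theorem), and they agree unless
some `b_ij ≠ 0`, which by the union bound has probability at most `Σ_ij c r_i s_j / T = c T`.
-/

open Finset

theorem Finset.sum_piAntidiag_prod_pow_div_factorial {τ R : Type*} [DecidableEq τ] [Field R]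
    [CharZero R] (s : Finset τ) (x : τ → R) (n : ℕ) :
    ∑ f ∈ piAntidiag s n, ∏ i ∈ s, x i ^ f i / (f i).factorial =
      (∑ i ∈ s, x i) ^ n / n.factorial := by
  rw [sum_pow_eq_sum_piAntidiag, sum_div]
  refine sum_congr rfl fun f hf => ?_
  obtain ⟨hfn, -⟩ := mem_piAntidiag.mp hf
  have hspec : ((∏ i ∈ s, (f i).factorial : ℕ) : R) * Nat.multinomial s f = n.factorial := by
    rw [← hfn]; exact_mod_cast Nat.multinomial_spec s f
  have hmult : (Nat.multinomial s f : R) ≠ 0 := by exact_mod_cast (Nat.multinomial_pos s f).ne'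
  rw [prod_div_distrib, ← hspec, Nat.cast_prod, mul_comm (Nat.multinomial s f : R),
    mul_div_mul_right _ _ hmult]

theorem Fin.eq_of_forall_castSucc_of_sum_eq {M : Type*} [AddCancelCommMonoid M] {n : ℕ}
    {f g : Fin (n + 1) → M} (h : ∀ i : Fin n, f i.castSucc = g i.castSucc)
    (hsum : ∑ i, f i = ∑ i, g i) : f = g := by
  rw [Fin.sum_univ_castSucc, Fin.sum_univ_castSucc, Fintype.sum_congr _ _ h] at hsum
  have hlast := add_left_cancel hsum
  funext i
  exact Fin.lastCases hlast h i

theorem Finset.sum_piAntidiag_univ_eq_sum_fin {τ : Type*} [Fintype τ] [DecidableEq τ]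
    {k u : ℕ} (hu : u ≤ k) (F : (τ → ℕ) → ℝ) :
    ∑ f ∈ piAntidiag univ u, F f =
      ∑ a : τ → Fin (k + 1), if ∑ t, (a t : ℕ) = u then F (fun t => a t) else 0 := by
  have le_of_mem : ∀ f ∈ piAntidiag (univ : Finset τ) u, ∀ t, f t ≤ k := fun f hf t =>
    (single_le_sum (fun _ _ => Nat.zero_le _) (mem_univ t)).trans
      ((mem_piAntidiag.mp hf).1.le.trans hu)
  symm
  rw [← sum_filter]
  refine sum_nbij' (fun a t => a t) (fun f t => ⟨min (f t) k, by omega⟩) ?_ ?_ ?_ ?_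
    fun _ _ => rfl
  · intro a ha
    simpa using ha
  · intro f hf
    have hmin : ∀ t, min (f t) k = f t := fun t => min_eq_left (le_of_mem f hf t)
    simpa [hmin] using hf
  · intro a _
    funext t
    exact Fin.ext (min_eq_left (Nat.lt_succ_iff.mp (a t).isLt))
  · intro f hf
    funext t
    exact min_eq_left (le_of_mem f hf t)

namespace RTree

section Pushforward

variable {α β γ : Type*} [Fintype α] [DecidableEq β]

def pushforward (f : α → β) (P : α → ℝ) : β → ℝ :=
  fun b => ∑ a, if f a = b then P a else 0

theorem sum_mul_pushforward [Fintype β] (f : α → β) (P : α → ℝ) (φ : β → ℝ) :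
    ∑ b, φ b * pushforward f P b = ∑ a, φ (f a) * P a := by
  simp only [pushforward, mul_sum, mul_ite, mul_zero]
  rw [sum_comm]
  simp

theorem pushforward_comp [Fintype β] [DecidableEq γ] (g : β → γ) (f : α → β) (P : α → ℝ) :
    pushforward (g ∘ f) P = pushforward g (pushforward f P) := by
  ext c
  have h := sum_mul_pushforward f P (fun b => if g b = c then 1 else 0)
  simp only [ite_mul, one_mul, zero_mul] at h
  exact h.symm

theorem pushforward_comp_equiv {α' : Type*} [Fintype α'] (e : α' ≃ α) (f : α → β)
    (P : α → ℝ) : pushforward (f ∘ e) (P ∘ e) = pushforward f P := by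
  ext b
  exact e.sum_comp fun a => if f a = b then P a else 0

theorem tvDist_pushforward_le [Fintype β] (f g : α → β) {P : α → ℝ} (hP : ∀ a, 0 ≤ P a) :
    tvDist (pushforward f P) (pushforward g P) ≤ ∑ a, if f a = g a then 0 else P a := by
  have pointwise : ∀ b, |pushforward f P b - pushforward g P b| ≤
      ∑ a, if f a = g a then 0 else
        (if f a = b then P a else 0) + (if g a = b then P a else 0) := by
    intro b
    rw [pushforward, pushforward, ← sum_sub_distrib]
    refine (abs_sum_le_sum_abs _ _).trans (sum_le_sum fun a _ => ?_)
    split_ifs <;> simp_all [abs_of_nonneg]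
  calc tvDist (pushforward f P) (pushforward g P)
      ≤ (∑ b, ∑ a, if f a = g a then 0 else
          (if f a = b then P a else 0) + (if g a = b then P a else 0)) / 2 := by
        unfold tvDist; gcongr with b; exact pointwise b
    _ = ∑ a, if f a = g a then 0 else P a := by
        rw [sum_comm, sum_div]
        refine sum_congr rfl fun a _ => ?_
        split_ifs
        · simp
        · rw [sum_add_distrib, sum_ite_eq, sum_ite_eq]
          simp

end Pushforward

section PiDist

variable {ι α β : Type*} [Fintype ι]

def piDist (μ : ι → α → ℝ) : (ι → α) → ℝ := fun a => ∏ i, μ i (a i)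

theorem piDist_nonneg {μ : ι → α → ℝ} (hμ : ∀ i z, 0 ≤ μ i z) (a : ι → α) :
    0 ≤ piDist μ a :=
  prod_nonneg fun i _ => hμ i (a i)

variable [DecidableEq ι] [Fintype α]

theorem sum_piDist (μ : ι → α → ℝ) : ∑ a, piDist μ a = ∏ i, ∑ z, μ i z :=
  (Fintype.prod_sum μ).symm

theorem pushforward_pi_piDist [DecidableEq β] (f : ι → α → β) (μ : ι → α → ℝ) :
    pushforward (fun a i => f i (a i)) (piDist μ) =
      piDist fun i => pushforward (f i) (μ i) := by
  ext b
  simp only [pushforward, piDist, funext_iff, ← Fintype.prod_ite_zero]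
  exact (Fintype.prod_sum fun i z => if f i z = b i then μ i z else 0).symm

theorem pushforward_eval_piDist [DecidableEq α] {μ : ι → α → ℝ} (hμ : ∀ i, ∑ z, μ i z = 1)
    (i : ι) : pushforward (fun a => a i) (piDist μ) = μ i := by
  ext z
  have h : ∀ a : ι → α, (if a i = z then piDist μ a else 0) =
      ∏ j, if j = i → a j = z then μ j (a j) else 0 := by
    intro a
    simp only [Fintype.prod_ite_zero, forall_eq, piDist]
  simp only [pushforward, h]
  rw [← Fintype.prod_sum fun j v => if j = i → v = z then μ j v else 0]
  rw [Fintype.prod_eq_single i fun j hj => by simpa [hj] using hμ j]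
  simp

end PiDist

section TruncPoisson

variable (k : ℕ)

noncomputable def truncPoisson (lam : ℝ) : Fin (k + 1) → ℝ := fun u => poisTrunc lam k u

def truncSum {τ : Type*} [Fintype τ] (a : τ → Fin (k + 1)) : Fin (k + 1) :=
  ⟨min (∑ t, (a t : ℕ)) k, Nat.lt_succ_of_le (min_le_right _ _)⟩

variable {k}

theorem truncPoisson_of_lt (lam : ℝ) {u : Fin (k + 1)} (hu : (u : ℕ) < k) :
    truncPoisson k lam u = Real.exp (-lam) * lam ^ (u : ℕ) / (u : ℕ).factorial :=
  if_pos hu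

theorem sum_truncPoisson (lam : ℝ) : ∑ u, truncPoisson k lam u = 1 := by
  rw [Fin.sum_univ_castSucc,
    Fintype.sum_congr _ _ fun i => truncPoisson_of_lt lam i.castSucc_lt_last]
  simp only [Fin.val_castSucc]
  rw [Fin.sum_univ_eq_sum_range (fun v => Real.exp (-lam) * lam ^ v / v.factorial)]
  simp [truncPoisson, poisTrunc]

theorem truncPoisson_nonneg {lam : ℝ} (hlam : 0 ≤ lam) (u : Fin (k + 1)) :
    0 ≤ truncPoisson k lam u := by
  unfold truncPoisson poisTrunc
  split_ifs
  · positivity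
  · simp_rw [sub_nonneg, mul_div_assoc, ← mul_sum]
    calc Real.exp (-lam) * ∑ v ∈ range k, lam ^ v / v.factorial
        ≤ Real.exp (-lam) * Real.exp lam := by gcongr; exact Real.sum_le_exp_of_nonneg hlam k
      _ = 1 := by rw [← Real.exp_add, neg_add_cancel, Real.exp_zero]

theorem one_sub_truncPoisson_zero_le {lam : ℝ} (hlam : 0 ≤ lam) :
    1 - truncPoisson k lam 0 ≤ lam := by
  rcases Nat.eq_zero_or_pos k with rfl | hk
  · simp [truncPoisson, poisTrunc, hlam]
  · rw [truncPoisson_of_lt lam hk]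
    simpa using Real.add_one_le_exp (-lam)

end TruncPoisson

theorem psiMap_eq_pushforward (k : ℕ) [Fintype (TreeClass k)] (c : ℝ) (x : TreeClass k → ℝ) :
    PsiMap k c x =
      pushforward (fun a => recursionFun k fun i => a i)
        (piDist fun i => truncPoisson k (c * x i)) :=
  rfl

theorem pushforward_truncSum_piDist {k : ℕ} {τ : Type*} [Fintype τ] [DecidableEq τ]
    (η : τ → ℝ) :
    pushforward (truncSum k) (piDist fun t => truncPoisson k (η t)) =
      truncPoisson k (∑ t, η t) := by
  -- Below `k` nothing is truncated and the multinomial theorem applies; the atoms at `k` then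
  -- agree because both sides have total mass `1`.
  refine Fin.eq_of_forall_castSucc_of_sum_eq (fun u => ?_) ?_
  · have hu : (u.castSucc : ℕ) < k := u.castSucc_lt_last
    have hsummand : ∀ a : τ → Fin (k + 1),
        (if truncSum k a = u.castSucc then piDist (fun t => truncPoisson k (η t)) a else 0) =
          if ∑ t, (a t : ℕ) = u then
            ∏ t, Real.exp (-η t) * η t ^ (a t : ℕ) / (a t : ℕ).factorial else 0 := by
      intro a
      have hval : truncSum k a = u.castSucc ↔ ∑ t, (a t : ℕ) = u := by
        rw [Fin.ext_iff]
        show min (∑ t, (a t : ℕ)) k = u ↔ _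
        omega
      by_cases hsum : ∑ t, (a t : ℕ) = u
      · rw [if_pos (hval.mpr hsum), if_pos hsum]
        refine prod_congr rfl fun t _ => truncPoisson_of_lt _ ?_
        exact ((single_le_sum (fun _ _ => Nat.zero_le _) (mem_univ t)).trans hsum.le).trans_lt hu
      · rw [if_neg (mt hval.mp hsum), if_neg hsum]
    rw [pushforward, Fintype.sum_congr _ _ hsummand,
      ← sum_piAntidiag_univ_eq_sum_fin (u := u) hu.le
        fun f => ∏ t, Real.exp (-η t) * η t ^ f t / (f t).factorial,
      truncPoisson_of_lt _ hu]
    simp_rw [mul_div_assoc, prod_mul_distrib, ← mul_sum, ← Real.exp_sum, sum_neg_distrib,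
      sum_piAntidiag_prod_pow_div_factorial]
    rfl
  · have h := sum_mul_pushforward (truncSum k) (piDist fun t => truncPoisson k (η t)) 1
    simp only [Pi.one_apply, one_mul] at h
    rw [h, sum_piDist, sum_truncPoisson]
    simp [sum_truncPoisson]

section Coupling

variable {k : ℕ} {ι β : Type*}

def couplingRates (ρ : ι → ℝ) (w : ι → ι → ℝ) (i : ι) (o : Option ι) : ℝ :=
  o.elim (ρ i) (w i)

def optTranspose (ω : ι → Option ι → β) : ι → Option ι → β :=
  fun i o => o.elim (ω i none) fun j => ω j (some i)

theorem optTranspose_involutive : Function.Involutive (optTranspose (ι := ι) (β := β)) := by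
  intro ω
  funext i o
  cases o <;> rfl

variable [Fintype ι]

-- `ω i none` plays the role of `a_i` and `ω i (some j)` that of `b_ij`.
variable (k) in
noncomputable def couplingDist (ρ : ι → ℝ) (w : ι → ι → ℝ) :
    (ι → Option ι → Fin (k + 1)) → ℝ :=
  piDist fun i => piDist fun o => truncPoisson k (couplingRates ρ w i o)

def couplingFst (ω : ι → Option ι → Fin (k + 1)) : ι → Fin (k + 1) :=
  fun i => truncSum k (ω i)

def couplingSnd (ω : ι → Option ι → Fin (k + 1)) : ι → Fin (k + 1) :=
  couplingFst (optTranspose ω)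

theorem couplingDist_nonneg {ρ : ι → ℝ} {w : ι → ι → ℝ} (hρ : ∀ i, 0 ≤ ρ i)
    (hw : ∀ i j, 0 ≤ w i j) (ω : ι → Option ι → Fin (k + 1)) : 0 ≤ couplingDist k ρ w ω :=
  piDist_nonneg (fun i _ => piDist_nonneg (fun o _ => truncPoisson_nonneg (by
    cases o
    exacts [hρ i, hw i _]) _) _) ω

theorem couplingDist_optTranspose (ρ : ι → ℝ) (w : ι → ι → ℝ)
    (ω : ι → Option ι → Fin (k + 1)) :
    couplingDist k ρ w (optTranspose ω) = couplingDist k ρ (fun i j => w j i) ω := by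
  simp only [couplingDist, piDist, Fintype.prod_option, prod_mul_distrib]
  congr 1
  exact prod_comm

theorem couplingFst_eq_couplingSnd {ω : ι → Option ι → Fin (k + 1)}
    (h : ∀ i j, ω i (some j) = 0) : couplingFst ω = couplingSnd ω := by
  funext i
  simp [couplingSnd, couplingFst, truncSum, optTranspose, Fintype.sum_option, h]

variable [DecidableEq ι]

theorem pushforward_couplingFst_couplingDist (ρ : ι → ℝ) (w : ι → ι → ℝ) :
    pushforward couplingFst (couplingDist k ρ w) =
      piDist fun i => truncPoisson k (ρ i + ∑ j, w i j) := by
  unfold couplingFst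
  rw [couplingDist, pushforward_pi_piDist fun _ => truncSum k]
  simp_rw [pushforward_truncSum_piDist, Fintype.sum_option]
  rfl

theorem pushforward_couplingSnd_couplingDist (ρ : ι → ℝ) (w : ι → ι → ℝ) :
    pushforward couplingSnd (couplingDist k ρ w) =
      piDist fun i => truncPoisson k (ρ i + ∑ j, w j i) := by
  set e := (optTranspose_involutive (ι := ι) (β := Fin (k + 1))).toPerm
  have hdist : couplingDist k ρ w = couplingDist k ρ (fun i j => w j i) ∘ e :=
    funext fun ω => (couplingDist_optTranspose ρ (fun i j => w j i) ω).symm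
  rw [hdist, ← pushforward_couplingFst_couplingDist ρ fun i j => w j i]
  exact pushforward_comp_equiv e couplingFst _

theorem pushforward_apply_apply_couplingDist (ρ : ι → ℝ) (w : ι → ι → ℝ) (i : ι)
    (o : Option ι) :
    pushforward (fun ω : ι → Option ι → Fin (k + 1) => ω i o) (couplingDist k ρ w) =
      truncPoisson k (couplingRates ρ w i o) := by
  have hsum : ∀ i', ∑ v, piDist (fun o' => truncPoisson k (couplingRates ρ w i' o')) v = 1 :=
    fun i' => by simp [sum_piDist, sum_truncPoisson]
  rw [show (fun ω : ι → Option ι → Fin (k + 1) => ω i o) = (fun v => v o) ∘ (fun ω => ω i)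
    from rfl, pushforward_comp, couplingDist, pushforward_eval_piDist hsum,
    pushforward_eval_piDist fun _ => sum_truncPoisson _]

end Coupling

section CouplingBound

variable {k : ℕ} {ι : Type*} [Fintype ι] [DecidableEq ι] {ρ : ι → ℝ} {w : ι → ι → ℝ}

theorem sum_ite_apply_some_eq_zero_couplingDist_le (hw : ∀ i j, 0 ≤ w i j) (i j : ι) :
    ∑ ω, (if ω i (some j) = 0 then 0 else couplingDist k ρ w ω) ≤ w i j := by
  have h := sum_mul_pushforward (fun ω : ι → Option ι → Fin (k + 1) => ω i (some j))
    (couplingDist k ρ w) fun z => if z = 0 then 0 else 1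
  simp only [ite_mul, zero_mul, one_mul] at h
  rw [← h, pushforward_apply_apply_couplingDist, sum_ite, sum_const_zero, zero_add, filter_ne',
    sum_erase_eq_sub (mem_univ 0), sum_truncPoisson]
  exact one_sub_truncPoisson_zero_le (hw i j)

theorem sum_ite_couplingFst_eq_couplingSnd_le (hρ : ∀ i, 0 ≤ ρ i) (hw : ∀ i j, 0 ≤ w i j) :
    ∑ ω, (if couplingFst ω = couplingSnd ω then 0 else couplingDist k ρ w ω) ≤
      ∑ i, ∑ j, w i j := by
  set P := couplingDist k ρ w
  have hP := couplingDist_nonneg (k := k) hρ hw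
  have union_bound : ∀ ω, (if couplingFst ω = couplingSnd ω then 0 else P ω) ≤
      ∑ i, ∑ j, if ω i (some j) = 0 then 0 else P ω := by
    intro ω
    have hterm : ∀ i j, 0 ≤ if ω i (some j) = 0 then 0 else P ω := fun i j => by
      split_ifs
      exacts [le_rfl, hP ω]
    by_cases h0 : ∀ i j, ω i (some j) = 0
    · rw [if_pos (couplingFst_eq_couplingSnd h0)]
      exact sum_nonneg fun i _ => sum_nonneg fun j _ => hterm i j
    · simp only [not_forall] at h0
      obtain ⟨i, j, hij⟩ := h0
      calc (if couplingFst ω = couplingSnd ω then 0 else P ω)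
          ≤ P ω := by split_ifs; exacts [hP ω, le_rfl]
        _ = if ω i (some j) = 0 then 0 else P ω := (if_neg hij).symm
        _ ≤ ∑ j', if ω i (some j') = 0 then 0 else P ω :=
          single_le_sum (fun j' _ => hterm i j') (mem_univ j)
        _ ≤ ∑ i', ∑ j', if ω i' (some j') = 0 then 0 else P ω :=
          single_le_sum (fun i' _ => sum_nonneg fun j' _ => hterm i' j') (mem_univ i)
  calc ∑ ω, (if couplingFst ω = couplingSnd ω then 0 else P ω)
      ≤ ∑ ω, ∑ i, ∑ j, if ω i (some j) = 0 then 0 else P ω := sum_le_sum fun ω _ => union_bound ω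
    _ = ∑ i, ∑ j, ∑ ω, if ω i (some j) = 0 then 0 else P ω := by
      rw [sum_comm]
      exact sum_congr rfl fun i _ => sum_comm
    _ ≤ ∑ i, ∑ j, w i j :=
      sum_le_sum fun i _ => sum_le_sum fun j _ => sum_ite_apply_some_eq_zero_couplingDist_le hw i j

theorem tvDist_pushforward_piDist_truncPoisson_le {γ : Type*} [Fintype γ] [DecidableEq γ]
    (G : (ι → Fin (k + 1)) → γ) (hρ : ∀ i, 0 ≤ ρ i) (hw : ∀ i j, 0 ≤ w i j) :
    tvDist (pushforward G (piDist fun i => truncPoisson k (ρ i + ∑ j, w i j)))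
      (pushforward G (piDist fun i => truncPoisson k (ρ i + ∑ j, w j i))) ≤ ∑ i, ∑ j, w i j := by
  rw [← pushforward_couplingFst_couplingDist, ← pushforward_couplingSnd_couplingDist,
    ← pushforward_comp, ← pushforward_comp]
  refine (tvDist_pushforward_le _ _ (couplingDist_nonneg hρ hw)).trans ?_
  refine (sum_le_sum fun ω _ => ?_).trans (sum_ite_couplingFst_eq_couplingSnd_le hρ hw)
  by_cases h : couplingFst ω = couplingSnd ω
  · simp [h]
  · split_ifs
    exacts [couplingDist_nonneg hρ hw ω, le_rfl]

end CouplingBound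

theorem exists_transport_plan {ι : Type*} [Fintype ι] {x y : ι → ℝ} (hx : ∀ i, 0 ≤ x i)
    (hy : ∀ i, 0 ≤ y i) (hxy : ∑ i, x i = ∑ i, y i) :
    ∃ (m : ι → ℝ) (w : ι → ι → ℝ), (∀ i, 0 ≤ m i) ∧ (∀ i j, 0 ≤ w i j) ∧
      (∀ i, m i + ∑ j, w i j = x i) ∧ (∀ i, m i + ∑ j, w j i = y i) ∧
      ∑ i, ∑ j, w i j = tvDist x y := by
  set T := tvDist x y
  set m : ι → ℝ := fun i => min (x i) (y i)
  set r : ι → ℝ := fun i => x i - m i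
  set s : ι → ℝ := fun i => y i - m i
  have hr : ∀ i, 0 ≤ r i := fun i => sub_nonneg.mpr (min_le_left _ _)
  have hs : ∀ i, 0 ≤ s i := fun i => sub_nonneg.mpr (min_le_right _ _)
  have hrs : ∀ i, r i + s i = |x i - y i| := fun i => by
    rcases le_total (x i) (y i) with h | h
    · simp [r, s, m, min_eq_left h, abs_of_nonpos (sub_nonpos.mpr h)]
    · simp [r, s, m, min_eq_right h, abs_of_nonneg (sub_nonneg.mpr h)]
  have hdiff : ∑ i, r i = ∑ i, s i := by
    rw [← sub_eq_zero, ← sum_sub_distrib]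
    simp only [r, s, sub_sub_sub_cancel_right]
    rw [sum_sub_distrib, hxy, sub_self]
  have htotal : ∑ i, r i + ∑ i, s i = 2 * T := by
    rw [← sum_add_distrib, Fintype.sum_congr _ _ hrs]
    simp only [T, tvDist]
    ring
  have hsum_r : ∑ i, r i = T := by linarith
  have hsum_s : ∑ i, s i = T := by linarith
  have hscale : ∀ {z : ι → ℝ}, (∀ i, 0 ≤ z i) → ∑ i, z i = T → ∀ i, z i * T / T = z i := by
    intro z hz hzT i
    rcases eq_or_ne T 0 with hT | hT
    · have := (single_le_sum (fun j _ => hz j) (mem_univ i)).trans hzT.le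
      rw [hT] at this ⊢
      simp [le_antisymm this (hz i)]
    · exact mul_div_cancel_right₀ _ hT
  refine ⟨m, fun i j => r i * s j / T, fun i => le_min (hx i) (hy i),
    fun i j => div_nonneg (mul_nonneg (hr i) (hs j)) (hsum_r ▸ sum_nonneg fun i _ => hr i),
    fun i => ?_, fun i => ?_, ?_⟩
  · rw [← sum_div, ← mul_sum, hsum_s, hscale hr hsum_r]
    simp [r]
  · rw [← sum_div, ← sum_mul, hsum_r, mul_comm, hscale hs hsum_s]
    simp [s]
  · simp_rw [← sum_div, ← mul_sum, hsum_s]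
    rw [← sum_mul, hsum_r, mul_self_div_self]

theorem tv_contraction_subcritical_general (k : ℕ) [Fintype (TreeClass k)]
    (c : ℝ) (hc0 : 0 < c)
    (x y : TreeClass k → ℝ) (hx : x ∈ simplexD k) (hy : y ∈ simplexD k) :
    tvDist (PsiMap k c x) (PsiMap k c y) ≤ c * tvDist x y := by
  obtain ⟨m, w, hm, hw, hrow, hcol, hmass⟩ :=
    exists_transport_plan hx.1 hy.1 (hx.2.trans hy.2.symm)
  have hcoupling := tvDist_pushforward_piDist_truncPoisson_le (k := k)
    (ρ := fun i => c * m i) (w := fun i j => c * w i j) (fun a => recursionFun k fun i => a i)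
    (fun i => mul_nonneg hc0.le (hm i)) (fun i j => mul_nonneg hc0.le (hw i j))
  simp only [← mul_sum, ← mul_add, hrow, hcol, hmass] at hcoupling
  rwa [psiMap_eq_pushforward, psiMap_eq_pushforward]

/-- **Theorem (subcritical contraction in total variation).**
Fix a positive integer `k`.  For every `c` with `0 < c < 1` and all `x⃗, y⃗ ∈ D`,
`TV(Ψ_c(x⃗), Ψ_c(y⃗)) ≤ c · TV(x⃗, y⃗)`. -/
theorem tv_contraction_subcritical (k : ℕ) (hk : 0 < k) [Fintype (TreeClass k)]
    (c : ℝ) (hc0 : 0 < c) (hc1 : c < 1)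
    (x y : TreeClass k → ℝ) (hx : x ∈ simplexD k) (hy : y ∈ simplexD k) :
    tvDist (PsiMap k c x) (PsiMap k c y) ≤ c * tvDist x y :=
  tv_contraction_subcritical_general k c hc0 x y hx hy

end RTree
end

section
/- For every c with 0 < c < 1 there exist a positive integer s and a real α < 1 such that for all x⃗, y⃗ ∈ D, ρ(Ψ_c^s(x⃗), Ψ_c^s(y⃗)) ≤ α · ρ(x⃗, y⃗), where ρ is the Euclidean metric on ℝ^m and Ψ_c^s is the s-fold iterate of Ψ_c. In fact one may take any s with 2·c^s·√m < 1 and α = 2·c^s·√m. -/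
open FirstOrder MeasureTheory
open scoped Classical

/-! The counts `n_j` are independent truncated `Poisson(c x_j)` variables, so `Ψ_c x` is the
image under `Γ` of a product of truncated Poisson laws, and taking images does not increase
total variation. Move the means linearly from `c y` to `c x`; the total mass stays `c`. The
derivative of a truncated Poisson law in its mean is the law of the shifted variable minus the
law itself, and since the means have constant sum the second parts cancel in the product, so
the derivative has `ℓ¹`-norm at most `Σ_j c |x_j - y_j|`. Hence `TV(Ψ_c x, Ψ_c y) ≤ c TV(x, y)`,
iterating gives `c^s`, and `ρ ≤ 2 TV ≤ √m ρ` passes to the Euclidean metric. -/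

open Finset

namespace RTree

/-- The law of `min N k`, on `{0, …, k}`, for a random variable `N` with point masses `f`. -/
noncomputable def truncPmf (f : ℕ → ℝ) (k u : ℕ) : ℝ :=
  if u < k then f u else 1 - ∑ v ∈ range k, f v

lemma sum_truncPmf (f : ℕ → ℝ) (k : ℕ) : ∑ u : Fin (k + 1), truncPmf f k u = 1 := by
  have h : ∀ u ∈ range k, truncPmf f k u = f u := fun u hu => if_pos (mem_range.mp hu)
  rw [Fin.sum_univ_eq_sum_range (truncPmf f k) (k + 1), sum_range_succ, sum_congr rfl h]
  simp [truncPmf]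

lemma truncPmf_nonneg {f : ℕ → ℝ} (hf : ∀ u, 0 ≤ f u) {k : ℕ}
    (hk : ∑ v ∈ range k, f v ≤ 1) (u : ℕ) : 0 ≤ truncPmf f k u := by
  unfold truncPmf
  split_ifs
  · exact hf u
  · linarith

lemma hasDerivAt_truncPmf {f : ℝ → ℕ → ℝ} {g : ℕ → ℝ} {x : ℝ}
    (hf : ∀ u, HasDerivAt (f · u) (g u - f x u) x) (k u : ℕ) :
    HasDerivAt (fun l => truncPmf (f l) k u) (truncPmf g k u - truncPmf (f x) k u) x := by
  unfold truncPmf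
  split_ifs
  · exact hf u
  · refine ((hasDerivAt_const x (1 : ℝ)).sub (HasDerivAt.fun_sum fun v _ => hf v)).congr_deriv ?_
    rw [sum_sub_distrib]
    ring

/-- `poisTrunc λ k` unfolds to `truncPmf (poisTerm λ) k`; the `poisTrunc` lemmas below
rely on it. -/
noncomputable def poisTerm (lam : ℝ) (u : ℕ) : ℝ :=
  Real.exp (-lam) * lam ^ u / u.factorial

/-- The point masses of `N + 1` for `N ~ Poisson(λ)`. -/
noncomputable def poisSuccTerm (lam : ℝ) : ℕ → ℝ
  | 0 => 0
  | u + 1 => poisTerm lam u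

lemma poisTerm_nonneg {lam : ℝ} (hl : 0 ≤ lam) (u : ℕ) : 0 ≤ poisTerm lam u := by
  unfold poisTerm; positivity

lemma poisSuccTerm_nonneg {lam : ℝ} (hl : 0 ≤ lam) : ∀ u, 0 ≤ poisSuccTerm lam u
  | 0 => le_rfl
  | u + 1 => poisTerm_nonneg hl u

lemma sum_range_poisTerm_le_one {lam : ℝ} (hl : 0 ≤ lam) (k : ℕ) :
    ∑ v ∈ range k, poisTerm lam v ≤ 1 :=
  calc ∑ v ∈ range k, poisTerm lam v
      = Real.exp (-lam) * ∑ v ∈ range k, lam ^ v / v.factorial := by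
        rw [mul_sum]
        exact sum_congr rfl fun v _ => mul_div_assoc _ _ _
    _ ≤ Real.exp (-lam) * Real.exp lam := by gcongr; exact Real.sum_le_exp_of_nonneg hl k
    _ = 1 := by rw [← Real.exp_add, neg_add_cancel, Real.exp_zero]

lemma sum_range_poisSuccTerm_le_one {lam : ℝ} (hl : 0 ≤ lam) :
    ∀ k, ∑ v ∈ range k, poisSuccTerm lam v ≤ 1
  | 0 => by simp
  | k + 1 => by
    rw [sum_range_succ']
    simpa [poisSuccTerm] using sum_range_poisTerm_le_one hl k

lemma hasDerivAt_poisTerm (lam : ℝ) (u : ℕ) :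
    HasDerivAt (poisTerm · u) (poisSuccTerm lam u - poisTerm lam u) lam := by
  have hexp : HasDerivAt (fun l : ℝ => Real.exp (-l)) (-Real.exp (-lam)) lam := by
    simpa using (hasDerivAt_neg lam).exp
  refine ((hexp.mul (hasDerivAt_pow u lam)).div_const (u.factorial : ℝ)).congr_deriv ?_
  cases u with
  | zero => simp [poisTerm, poisSuccTerm]
  | succ v =>
    simp only [poisTerm, poisSuccTerm, Nat.factorial_succ, Nat.add_sub_cancel]
    push_cast
    field_simp
    ring

/-- The law of `min (N + 1) k` for `N ~ Poisson(λ)`: `λ ↦ poisTrunc λ k u` has derivative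
`poisSuccTrunc λ k u - poisTrunc λ k u`. -/
noncomputable def poisSuccTrunc (lam : ℝ) (k : ℕ) : ℕ → ℝ :=
  truncPmf (poisSuccTerm lam) k

lemma hasDerivAt_poisTrunc (lam : ℝ) (k u : ℕ) :
    HasDerivAt (poisTrunc · k u) (poisSuccTrunc lam k u - poisTrunc lam k u) lam :=
  hasDerivAt_truncPmf (hasDerivAt_poisTerm lam) k u

lemma poisTrunc_nonneg {lam : ℝ} (hl : 0 ≤ lam) (k u : ℕ) : 0 ≤ poisTrunc lam k u :=
  truncPmf_nonneg (poisTerm_nonneg hl) (sum_range_poisTerm_le_one hl k) u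

lemma poisSuccTrunc_nonneg {lam : ℝ} (hl : 0 ≤ lam) (k u : ℕ) : 0 ≤ poisSuccTrunc lam k u :=
  truncPmf_nonneg (poisSuccTerm_nonneg hl) (sum_range_poisSuccTerm_le_one hl k) u

section General

variable {ι κ : Type*} [Fintype ι] [Fintype κ]

lemma sum_abs_sub_le_of_sum_abs_deriv_le {F F' : ι → ℝ → ℝ} {a b C : ℝ} (hab : a ≤ b)
    (hF : ∀ i, ∀ t ∈ Set.Icc a b, HasDerivAt (F i) (F' i t) t)
    (hC : ∀ t ∈ Set.Ico a b, ∑ i, |F' i t| ≤ C) :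
    ∑ i, |F i b - F i a| ≤ C * (b - a) := by
  have hG : ∀ t ∈ Set.Icc a b, HasDerivWithinAt (fun t => WithLp.toLp 1 fun i => F i t)
      (WithLp.toLp 1 fun i => F' i t) (Set.Icc a b) t := fun t ht =>
    ((PiLp.continuousLinearEquiv 1 ℝ fun _ : ι => ℝ).symm.hasFDerivAt.comp_hasDerivAt t
      (hasDerivAt_pi.2 fun i => hF i t ht)).hasDerivWithinAt
  simpa [PiLp.norm_eq_of_L1] using norm_image_sub_le_of_norm_deriv_le_segment' hG
    (fun t ht => by simpa [PiLp.norm_eq_of_L1] using hC t ht) b (Set.right_mem_Icc.2 hab)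

lemma sum_abs_sum_ite_eq_le [DecidableEq κ] (g : ι → κ) (w : ι → ℝ) :
    ∑ j, |∑ b, if g b = j then w b else 0| ≤ ∑ b, |w b| :=
  calc ∑ j, |∑ b, if g b = j then w b else 0|
      ≤ ∑ j, ∑ b, if g b = j then |w b| else 0 :=
        sum_le_sum fun j _ => (abs_sum_le_sum_abs _ _).trans_eq
          (sum_congr rfl fun b _ => by split_ifs <;> simp)
    _ = ∑ b, |w b| := by
        rw [sum_comm]
        exact sum_congr rfl fun b _ => by rw [sum_ite_eq, if_pos (mem_univ _)]

variable [DecidableEq ι]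

lemma sum_prod_eq_one {p : ι → κ → ℝ} (hp : ∀ i, ∑ u, p i u = 1) :
    ∑ b : ι → κ, ∏ i, p i (b i) = 1 := by
  rw [← Fintype.prod_sum]
  simp [hp]

lemma sum_mul_prod_erase_eq_one {p : ι → κ → ℝ} {q : κ → ℝ} (hp : ∀ i, ∑ u, p i u = 1)
    (hq : ∑ u, q u = 1) (i : ι) :
    ∑ b : ι → κ, q (b i) * ∏ j ∈ univ.erase i, p j (b j) = 1 := by
  have hpq : ∀ j, ∑ u, Function.update p i q j u = 1 := by
    intro j
    rcases eq_or_ne j i with rfl | hj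
    · simpa using hq
    · simpa [hj] using hp j
  rw [← sum_prod_eq_one hpq]
  refine sum_congr rfl fun b _ => ?_
  rw [← mul_prod_erase univ _ (mem_univ i), Function.update_self]
  congr 1
  exact prod_congr rfl fun j hj => by rw [Function.update_of_ne (ne_of_mem_erase hj)]

lemma sum_abs_sum_mul_prod_erase_le {p q : ι → κ → ℝ} (hp0 : ∀ i u, 0 ≤ p i u)
    (hq0 : ∀ i u, 0 ≤ q i u) (hp : ∀ i, ∑ u, p i u = 1) (hq : ∀ i, ∑ u, q i u = 1)
    (d : ι → ℝ) :
    ∑ b : ι → κ, |∑ i, d i * (q i (b i) * ∏ j ∈ univ.erase i, p j (b j))| ≤ ∑ i, |d i| :=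
  calc ∑ b : ι → κ, |∑ i, d i * (q i (b i) * ∏ j ∈ univ.erase i, p j (b j))|
      ≤ ∑ b : ι → κ, ∑ i, |d i| * (q i (b i) * ∏ j ∈ univ.erase i, p j (b j)) := by
        refine sum_le_sum fun b _ => (abs_sum_le_sum_abs _ _).trans_eq ?_
        refine sum_congr rfl fun i _ => ?_
        rw [abs_mul, abs_of_nonneg (mul_nonneg (hq0 _ _) (prod_nonneg fun j _ => hp0 _ _))]
    _ = ∑ i, |d i| * ∑ b : ι → κ, q i (b i) * ∏ j ∈ univ.erase i, p j (b j) := by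
        rw [sum_comm]
        simp only [mul_sum]
    _ = ∑ i, |d i| := by simp only [sum_mul_prod_erase_eq_one hp (hq _), mul_one]

end General

lemma iterate_le_pow_mul {α : Type*} {S : Set α} {f : α → α} {d : α → α → ℝ} {c : ℝ}
    (hc : 0 ≤ c) (hS : Set.MapsTo f S S) (hf : ∀ x ∈ S, ∀ y ∈ S, d (f x) (f y) ≤ c * d x y)
    (n : ℕ) {x y : α} (hx : x ∈ S) (hy : y ∈ S) : d (f^[n] x) (f^[n] y) ≤ c ^ n * d x y := by
  induction n with
  | zero => simp
  | succ n ih =>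
    rw [Function.iterate_succ_apply', Function.iterate_succ_apply', pow_succ', mul_assoc]
    exact (hf _ (hS.iterate n hx) _ (hS.iterate n hy)).trans (mul_le_mul_of_nonneg_left ih hc)

section Distances

variable {ι : Type*} [Fintype ι]

lemma euclDist_le_two_mul_tvDist (x y : ι → ℝ) : euclDist x y ≤ 2 * tvDist x y := by
  have h : ∑ j, (x j - y j) ^ 2 ≤ (∑ j, |x j - y j|) ^ 2 := by
    simpa [sq_abs] using sum_sq_le_sq_sum_of_nonneg (s := univ) fun j _ => abs_nonneg (x j - y j)
  rw [euclDist, tvDist, mul_div_cancel₀ _ two_ne_zero]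
  exact Real.sqrt_le_iff.2 ⟨sum_nonneg fun j _ => abs_nonneg _, h⟩

lemma two_mul_tvDist_le_sqrt_card_mul_euclDist (x y : ι → ℝ) :
    2 * tvDist x y ≤ Real.sqrt (Fintype.card ι) * euclDist x y := by
  have h : (∑ j, |x j - y j|) ^ 2 ≤ Fintype.card ι * ∑ j, (x j - y j) ^ 2 := by
    simpa [sq_abs] using sq_sum_le_card_mul_sum_sq (s := univ) (f := fun j => |x j - y j|)
  rw [tvDist, mul_div_cancel₀ _ two_ne_zero, euclDist, ← Real.sqrt_mul (Nat.cast_nonneg _)]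
  exact Real.le_sqrt_of_sq_le h

end Distances

section ProductPoisson

variable {ι : Type*} [Fintype ι] [DecidableEq ι] (k : ℕ)

lemma sum_poisTrunc (lam : ℝ) : ∑ u : Fin (k + 1), poisTrunc lam k u = 1 :=
  sum_truncPmf _ k

/-- Along a segment of parameters of constant total mass, the `-poisTrunc` parts of the
factor derivatives cancel. -/
lemma hasDerivAt_prod_poisTrunc (ℓ d : ι → ℝ) (hd : ∑ i, d i = 0) (b : ι → Fin (k + 1))
    (t : ℝ) :
    HasDerivAt (fun t => ∏ i, poisTrunc (ℓ i + t * d i) k (b i))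
      (∑ i, d i * (poisSuccTrunc (ℓ i + t * d i) k (b i) *
        ∏ j ∈ univ.erase i, poisTrunc (ℓ j + t * d j) k (b j))) t := by
  set P : ι → ℝ := fun i => poisTrunc (ℓ i + t * d i) k (b i)
  have hfactor : ∀ i ∈ univ, HasDerivAt (fun t => poisTrunc (ℓ i + t * d i) k (b i))
      ((poisSuccTrunc (ℓ i + t * d i) k (b i) - P i) * d i) t := fun i _ =>
    (hasDerivAt_poisTrunc _ k (b i)).comp t ((hasDerivAt_mul_const (d i)).const_add (ℓ i))
  refine (HasDerivAt.fun_finsetProd hfactor).congr_deriv ?_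
  have hsplit : ∀ i ∈ univ, (∏ j ∈ univ.erase i, P j) •
      ((poisSuccTrunc (ℓ i + t * d i) k (b i) - P i) * d i) =
      d i * (poisSuccTrunc (ℓ i + t * d i) k (b i) * ∏ j ∈ univ.erase i, P j) -
        d i * ∏ j, P j := fun i _ => by
    rw [smul_eq_mul, ← mul_prod_erase univ P (mem_univ i)]
    ring
  rw [sum_congr rfl hsplit, sum_sub_distrib, ← sum_mul, hd, zero_mul, sub_zero]

lemma sum_abs_prod_poisTrunc_sub_le (lam mu : ι → ℝ) (hlam : ∀ i, 0 ≤ lam i)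
    (hmu : ∀ i, 0 ≤ mu i) (hsum : ∑ i, lam i = ∑ i, mu i) :
    ∑ b : ι → Fin (k + 1), |∏ i, poisTrunc (mu i) k (b i) - ∏ i, poisTrunc (lam i) k (b i)|
      ≤ ∑ i, |mu i - lam i| := by
  have hd : ∑ i, (mu i - lam i) = 0 := by rw [sum_sub_distrib, hsum, sub_self]
  have hseg : ∀ t ∈ Set.Icc (0 : ℝ) 1, ∀ i, 0 ≤ lam i + t * (mu i - lam i) := fun t ht i => by
    nlinarith [hlam i, hmu i, ht.1, ht.2]
  have h := sum_abs_sub_le_of_sum_abs_deriv_le zero_le_one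
    (fun b t _ => hasDerivAt_prod_poisTrunc k lam (fun i => mu i - lam i) hd b t)
    (fun t ht => sum_abs_sum_mul_prod_erase_le (κ := Fin (k + 1))
      (fun i u => poisTrunc_nonneg (hseg t (Set.Ico_subset_Icc_self ht) i) k u)
      (fun i u => poisSuccTrunc_nonneg (hseg t (Set.Ico_subset_Icc_self ht) i) k u)
      (fun i => sum_poisTrunc k _) (fun i => sum_truncPmf _ k) _)
  simpa using h

end ProductPoisson

section PsiMap

variable (k : ℕ) [Fintype (TreeClass k)] {c : ℝ}

lemma psiMap_mem_simplexD (hc : 0 ≤ c) {x : TreeClass k → ℝ} (hx : x ∈ simplexD k) :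
    PsiMap k c x ∈ simplexD k := by
  refine ⟨fun j => sum_nonneg fun b _ => ?_, ?_⟩
  · split_ifs
    · exact prod_nonneg fun i _ => poisTrunc_nonneg (mul_nonneg hc (hx.1 i)) k _
    · exact le_rfl
  · unfold PsiMap
    rw [sum_comm]
    simp only [sum_ite_eq, mem_univ, if_true]
    exact sum_prod_eq_one fun i => sum_poisTrunc k _

lemma tvDist_psiMap_le (hc : 0 ≤ c) {x y : TreeClass k → ℝ} (hx : x ∈ simplexD k)
    (hy : y ∈ simplexD k) : tvDist (PsiMap k c x) (PsiMap k c y) ≤ c * tvDist x y := by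
  have hmass : ∑ i, c * y i = ∑ i, c * x i := by rw [← mul_sum, ← mul_sum, hx.2, hy.2]
  have h := (sum_abs_sum_ite_eq_le (fun b : TreeClass k → Fin (k + 1) => recursionFun k (b ·))
    fun b => ∏ i, poisTrunc (c * x i) k (b i) - ∏ i, poisTrunc (c * y i) k (b i)).trans
    (sum_abs_prod_poisTrunc_sub_le k _ _ (fun i => mul_nonneg hc (hy.1 i))
      (fun i => mul_nonneg hc (hx.1 i)) hmass)
  simp only [← mul_sub, abs_mul, abs_of_nonneg hc, ← mul_sum] at h
  rw [tvDist, tvDist, mul_div_assoc']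
  gcongr
  simpa only [PsiMap, ← sum_sub_distrib, ite_sub_ite, sub_self] using h

end PsiMap

theorem eucl_contraction_subcritical_general (k : ℕ) [Fintype (TreeClass k)]
    (c : ℝ) (hc0 : 0 < c) (hc1 : c < 1) :
    (∃ s : ℕ, 0 < s ∧ ∃ α : ℝ, α < 1 ∧ ∀ x ∈ simplexD k, ∀ y ∈ simplexD k,
        euclDist ((PsiMap k c)^[s] x) ((PsiMap k c)^[s] y) ≤ α * euclDist x y) ∧
      ∀ s : ℕ, 2 * c ^ s * Real.sqrt (Fintype.card (TreeClass k)) < 1 →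
        ∀ x ∈ simplexD k, ∀ y ∈ simplexD k,
          euclDist ((PsiMap k c)^[s] x) ((PsiMap k c)^[s] y) ≤
            2 * c ^ s * Real.sqrt (Fintype.card (TreeClass k)) * euclDist x y := by
  set m := Real.sqrt (Fintype.card (TreeClass k))
  have contraction : ∀ s : ℕ, ∀ x ∈ simplexD k, ∀ y ∈ simplexD k,
      euclDist ((PsiMap k c)^[s] x) ((PsiMap k c)^[s] y) ≤ 2 * c ^ s * m * euclDist x y := by
    intro s x hx y hy
    have htv := iterate_le_pow_mul hc0.le (fun _ hx => psiMap_mem_simplexD k hc0.le hx)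
      (fun _ hx _ hy => tvDist_psiMap_le k hc0.le hx hy) s hx hy
    have hρ : 0 ≤ c ^ s * m * euclDist x y := by unfold euclDist; positivity
    calc euclDist ((PsiMap k c)^[s] x) ((PsiMap k c)^[s] y)
        ≤ 2 * tvDist ((PsiMap k c)^[s] x) ((PsiMap k c)^[s] y) := euclDist_le_two_mul_tvDist _ _
      _ ≤ c ^ s * (2 * tvDist x y) := by linarith
      _ ≤ c ^ s * (m * euclDist x y) :=
          mul_le_mul_of_nonneg_left (two_mul_tvDist_le_sqrt_card_mul_euclDist x y) (by positivity)
      _ ≤ 2 * c ^ s * m * euclDist x y := by linarith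
  have hsmall : ∀ᶠ s : ℕ in Filter.atTop, 2 * c ^ s * m < 1 := by
    refine Filter.Tendsto.eventually_lt_const one_pos ?_
    simpa using ((tendsto_pow_atTop_nhds_zero_of_lt_one hc0.le hc1).const_mul 2).mul_const m
  obtain ⟨s, hs, hs0⟩ := (hsmall.and (Filter.eventually_gt_atTop 0)).exists
  exact ⟨⟨s, hs0, _, hs, contraction s⟩, fun s _ => contraction s⟩

/-- **Theorem (subcritical contraction in the Euclidean metric).**
Fix a positive integer `k`.  For every `c` with `0 < c < 1` there exist a positive
integer `s` and a real `α < 1` such that for all `x⃗, y⃗ ∈ D`,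
`ρ(Ψ_c^s(x⃗), Ψ_c^s(y⃗)) ≤ α · ρ(x⃗, y⃗)`, where `ρ` is the Euclidean metric on `ℝ^m`
and `Ψ_c^s` is the `s`-fold iterate of `Ψ_c`.  In fact one may take any `s` with
`2·c^s·√m < 1`, together with `α = 2·c^s·√m`. -/
theorem eucl_contraction_subcritical (k : ℕ) (hk : 0 < k) [Fintype (TreeClass k)]
    (c : ℝ) (hc0 : 0 < c) (hc1 : c < 1) :
    (∃ s : ℕ, 0 < s ∧ ∃ α : ℝ, α < 1 ∧ ∀ x ∈ simplexD k, ∀ y ∈ simplexD k,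
        euclDist ((PsiMap k c)^[s] x) ((PsiMap k c)^[s] y) ≤ α * euclDist x y) ∧
      ∀ s : ℕ, 2 * c ^ s * Real.sqrt (Fintype.card (TreeClass k)) < 1 →
        ∀ x ∈ simplexD k, ∀ y ∈ simplexD k,
          euclDist ((PsiMap k c)^[s] x) ((PsiMap k c)^[s] y) ≤
            2 * c ^ s * Real.sqrt (Fintype.card (TreeClass k)) * euclDist x y :=
  eucl_contraction_subcritical_general k c hc0 hc1

end RTree
end

section
/- Fix c > 0 and a nonnegative integer s, and let Y be the sum of t independent copies of X(c, s), the number of generation-s nodes of the Galton–Watson tree T_c. Let K, γ > 0 and let BAD be an event (on the same probability space) with P[BAD] ≤ K·e^{−tγ}. Then there exist positive constants k' and κ (depending on K, γ, c, s but not on t or the event) such that E[Y · 1_{BAD}] ≤ k'·t·e^{−tκ}. -/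
open FirstOrder MeasureTheory
open scoped Classical

namespace RTree

/-! ### The Galton–Watson tree -/

/-- The Galton–Watson tree built from a family `ω` of offspring numbers indexed by the
potential vertices: vertex `v ++ [i]` is present iff `v` is present and `i < ω v`, i.e.
the vertex `v` has exactly `ω v` children (when `ω` is i.i.d. `Poisson(c)`, this is the
Galton–Watson tree with `Poisson(c)` offspring distribution). -/
def gwTree (ω : List ℕ → ℕ) : RTree where
  carrier := {v | ∀ w : List ℕ, w <+: v → ∀ h : w ≠ [], w.getLast h < ω w.dropLast}
  root_mem := fun w hw h => absurd (List.prefix_nil.mp hw) h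
  dropLast_mem := fun v hv w hw h => hv w (hw.trans (List.dropLast_prefix v)) h

/-- `μ` is the distribution of an i.i.d. family of `Poisson(c)` random variables
indexed by `List ℕ`: it is a probability measure whose finite-dimensional marginals
are products of Poisson distributions.  (Pushing such a `μ` forward by `gwTree`
yields the distribution `P_c` of the Galton–Watson tree `T_c`.) -/
def IsPoissonProduct (c : NNReal) (μ : Measure (List ℕ → ℕ)) : Prop :=
  IsProbabilityMeasure μ ∧
    ∀ (S : Finset (List ℕ)) (f : List ℕ → ℕ),
      μ {ω | ∀ v ∈ S, ω v = f v} = ∏ v ∈ S, ProbabilityTheory.poissonPMF c (f v)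

/-! ### Truncations, depth, universality, isomorphism -/

/-- `T|_s`: the truncation of `T` to generations `0, …, s`. -/
def truncAt (T : RTree) (s : ℕ) : RTree where
  carrier := {v ∈ T.carrier | v.length ≤ s}
  root_mem := ⟨T.root_mem, by simp⟩
  dropLast_mem := fun v hv =>
    ⟨T.dropLast_mem v hv.1, by
      have h1 := hv.2
      have h2 : v.dropLast.length = v.length - 1 := List.length_dropLast
      omega⟩

/-- The depth of a rooted tree. -/
noncomputable def treeDepth (T : RTree) : ℕ :=
  sSup {n | ∃ v ∈ T.carrier, v.length = n}

/-- Isomorphism of rooted trees: a bijection of the vertex sets preserving the root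
and the parent function. -/
def RTreeIso (T T' : RTree) : Prop :=
  ∃ e : T.V ≃ T'.V, e (rootV T) = rootV T' ∧ ∀ v, e (parentV T v) = parentV T' (e v)

/-- Given `k`, a rooted tree `T` is `s`-universal if its `k`-Ehrenfeucht value is
completely determined by `T|_s`: every tree whose `s`-truncation is isomorphic to that
of `T` has the same Ehrenfeucht value. -/
def sUniversal (k s : ℕ) (T : RTree) : Prop :=
  ∀ T' : RTree, RTreeIso (truncAt T' s) (truncAt T s) → EV k T' = EV k T

end RTree
namespace RTree

/-! ### Extensions of a fixed tree and labelled recursion -/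

/-- The offspring variables attached to the descendants of `v`. -/
def shiftω (v : List ℕ) (ω : List ℕ → ℕ) : List ℕ → ℕ := fun u => ω (v ++ u)

/-- `Ext(T₀)`: the random tree obtained from a fixed tree `T₀` of depth at most `s₀` by
growing, from each of its nodes at depth `s₀`, an independent Galton–Watson tree
truncated at depth `D₀` (the trees being independent since they use disjoint families
of offspring variables). -/
def extTree (T₀ : RTree) (s₀ D₀ : ℕ) (ω : List ℕ → ℕ) : RTree where
  carrier := T₀.carrier ∪
    {l | ∃ v w, v ∈ T₀.carrier ∧ v.length = s₀ ∧ w ∈ (gwTree (shiftω v ω)).carrier ∧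
      w.length ≤ D₀ ∧ l = v ++ w}
  root_mem := Or.inl T₀.root_mem
  dropLast_mem := by
    rintro l (hl | ⟨v, w, hv, hvl, hw, hwl, rfl⟩)
    · exact Or.inl (T₀.dropLast_mem _ hl)
    · cases w with
      | nil => exact Or.inl (by simpa using T₀.dropLast_mem _ hv)
      | cons a as =>
        refine Or.inr ⟨v, (a :: as).dropLast, hv, hvl,
          (gwTree (shiftω v ω)).dropLast_mem _ hw, ?_, ?_⟩
        · have : (a :: as).dropLast.length = (a :: as).length - 1 := List.length_dropLast
          omega
        · rw [List.dropLast_append_of_ne_nil (List.cons_ne_nil a as)]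

/-- Given a tree `T` whose nodes at depth `s` carry labels (classes in `Σₖ`) given by
`lab`, `upVal k T lab r v` computes the value of the node `v` lying `r` levels above
the labelled generation, by repeatedly applying the recursion function `Γ` to the
(truncated) counts of the values of its children. -/
noncomputable def upVal (k : ℕ) [Fintype (TreeClass k)] (T : RTree)
    (lab : List ℕ → TreeClass k) : ℕ → List ℕ → TreeClass k
  | 0, v => lab v
  | r + 1, v => recursionFun k (fun j =>
      truncCount k {i : ℕ | v ++ [i] ∈ T.carrier ∧ upVal k T lab r (v ++ [i]) = j})

instance (k : ℕ) : MeasurableSpace (TreeClass k) := ⊤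

/-- `π` is the joint distribution of an i.i.d. family of `Poisson(c)` offspring
variables indexed by `List ℕ` together with an independent i.i.d. family of
`Σₖ`-valued labels with distribution `x`, indexed by `List ℕ`. -/
def IsLabeledPoisson (k : ℕ) (c : NNReal) (x : TreeClass k → ℝ)
    (π : Measure ((List ℕ → ℕ) × (List ℕ → TreeClass k))) : Prop :=
  IsProbabilityMeasure π ∧
    ∀ (S S' : Finset (List ℕ)) (f : List ℕ → ℕ) (g : List ℕ → TreeClass k),
      π {p | (∀ v ∈ S, p.1 v = f v) ∧ (∀ v ∈ S', p.2 v = g v)} =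
        (∏ v ∈ S, ProbabilityTheory.poissonPMF c (f v)) *
          ∏ v ∈ S', ENNReal.ofReal (x (g v))

/-- `Ψ_c^s(T₀, x⃗)`: the distribution of the Ehrenfeucht value of the root obtained by
growing `Ext(T₀)` (of depth at most `s = s₀ + D₀`), assigning to each node at depth `s`
an independent label with distribution `x⃗`, and applying the recursion function `Γ`
upward through the generations; here `π` is the joint distribution of the offspring
variables and the labels. -/
noncomputable def psiExt (k : ℕ) [Fintype (TreeClass k)] (T₀ : RTree) (s₀ D₀ : ℕ)
    (π : Measure ((List ℕ → ℕ) × (List ℕ → TreeClass k))) : TreeClass k → ℝ :=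
  fun j => (π {p | upVal k (extTree T₀ s₀ D₀ p.1) p.2 (s₀ + D₀) [] = j}).toReal

end RTree

/-!
Write `Y · 1_BAD` as a sum over trees `i < t` and addresses `w` of length `s` of the indicator of
`{w ∈ T_i} ∩ BAD`. The event `w ∈ T_i` forces the offspring number of the `j`-th ancestor of `w`
to exceed the `j`-th letter of `w`, so by independence `P[w ∈ T_i] ≤ ∏ⱼ P[N ≥ wⱼ]` with
`N ~ Poisson(c)`, and a Chernoff bound makes this at most `∏ⱼ (e^{3c/2} 2^{-wⱼ})²`. Bounding
`P[{w ∈ T_i} ∩ BAD]` by the geometric mean `√(P[w ∈ T_i] · P[BAD])` and summing over `w` gives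
`E[Y · 1_BAD] ≤ t · (2e^{3c/2})^s · √K · e^{-tγ/2}`.
-/

open Real Set ProbabilityTheory
open scoped ENNReal NNReal

theorem ENNReal.tsum_fin_pi_prod {α : Type*} :
    ∀ {n : ℕ} (f : Fin n → α → ℝ≥0∞), ∑' g : Fin n → α, ∏ j, f j (g j) = ∏ j, ∑' a, f j a
  | 0, f => by simp [tsum_fintype]
  | n + 1, f => by
    rw [← (Fin.consEquiv fun _ => α).tsum_eq, ENNReal.tsum_prod', Fin.prod_univ_succ,
      ← ENNReal.tsum_fin_pi_prod (fun j => f j.succ), ← ENNReal.tsum_mul_right]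
    simp [Fin.consEquiv, Fin.prod_univ_succ, ENNReal.tsum_mul_left]

theorem ENNReal.min_sq_le_mul (a b : ℝ≥0∞) : min (a ^ 2) (b ^ 2) ≤ a * b := by
  rcases le_total a b with h | h
  · exact (min_le_left _ _).trans (by rw [sq]; gcongr)
  · exact (min_le_right _ _).trans (by rw [sq]; gcongr)

section Counting

variable {α β : Type*} (S : α → Set β)

theorem encard_eq_tsum_indicator_mem (a : α) :
    ((S a).encard : ℝ≥0∞) = ∑' b, {a | b ∈ S a}.indicator 1 a := by
  rw [← ENNReal.tsum_set_one]
  exact tsum_subtype (S a) 1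

theorem measurable_encard_of_measurableSet_mem [MeasurableSpace α] [Countable β]
    (hS : ∀ b, MeasurableSet {a | b ∈ S a}) :
    Measurable fun a => ((S a).encard : ℝ≥0∞) := by
  simp_rw [encard_eq_tsum_indicator_mem]
  exact Measurable.tsum fun b => measurable_one.indicator (hS b)

theorem setLIntegral_encard_eq_tsum [MeasurableSpace α] [Countable β] (μ : Measure α)
    (hS : ∀ b, MeasurableSet {a | b ∈ S a}) (B : Set α) :
    ∫⁻ a in B, ((S a).encard : ℝ≥0∞) ∂μ = ∑' b, μ ({a | b ∈ S a} ∩ B) := by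
  simp_rw [encard_eq_tsum_indicator_mem]
  rw [lintegral_tsum fun b => (measurable_one.indicator (hS b)).aemeasurable]
  refine tsum_congr fun b => ?_
  rw [lintegral_indicator_one (hS b), Measure.restrict_apply (hS b)]

end Counting

theorem List.encard_setOf_length_eq {α : Type*} (S : Set (List α)) (n : ℕ) :
    {w ∈ S | w.length = n}.encard = {g : Fin n → α | List.ofFn g ∈ S}.encard := by
  rw [← List.ofFn_injective.encard_image]
  congr 1
  ext w
  constructor
  · rintro ⟨hw, rfl⟩
    exact ⟨fun j => w[j], by simpa using hw, List.ofFn_getElem⟩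
  · rintro ⟨g, hg, rfl⟩
    exact ⟨hg, List.length_ofFn⟩

theorem tsum_four_pow_mul_poissonPMF (c : ℝ≥0) :
    ∑' n, 4 ^ n * poissonPMF c n = ENNReal.ofReal (exp (3 * c)) := by
  have hsum := (NormedSpace.expSeries_div_hasSum_exp (4 * c : ℝ)).mul_left (exp (-c))
  rw [← Real.exp_eq_exp_ℝ, ← Real.exp_add, show -(c : ℝ) + 4 * c = 3 * c by ring] at hsum
  rw [← hsum.tsum_eq, ENNReal.ofReal_tsum_of_nonneg (fun n => by positivity) hsum.summable]
  refine tsum_congr fun n => ?_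
  rw [show poissonPMF c n = ENNReal.ofReal (exp (-c) * c ^ n / n.factorial) from rfl,
    ← ENNReal.ofReal_ofNat 4, ← ENNReal.ofReal_pow (by norm_num),
    ← ENNReal.ofReal_mul (by positivity)]
  congr 1
  ring

/-- Chernoff's bound `P[N ≥ m] ≤ E[4 ^ N] / 4 ^ m`, written as a square so that its square root
is summable in `m`. -/
theorem poissonPMF_toOuterMeasure_Ici_le (c : ℝ≥0) (m : ℕ) :
    (poissonPMF c).toOuterMeasure (Ici m) ≤ (ENNReal.ofReal (exp (3 * c / 2)) * 2⁻¹ ^ m) ^ 2 := by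
  have hweight : ∀ n, (Ici m).indicator (poissonPMF c) n ≤ 4⁻¹ ^ m * (4 ^ n * poissonPMF c n) := by
    intro n
    by_cases h : m ≤ n
    · rw [indicator_of_mem (show n ∈ Ici m from h), ← mul_assoc, ← ENNReal.inv_pow]
      refine le_mul_of_one_le_left' ?_
      rw [← ENNReal.div_eq_inv_mul, ENNReal.le_div_iff_mul_le (by simp) (by simp), one_mul]
      exact pow_le_pow_right₀ (by norm_num) h
    · simp [indicator_of_notMem (show n ∉ Ici m from h)]
  calc (poissonPMF c).toOuterMeasure (Ici m)
      ≤ ∑' n, 4⁻¹ ^ m * (4 ^ n * poissonPMF c n) :=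
        (PMF.toOuterMeasure_apply _ _).trans_le (ENNReal.tsum_le_tsum hweight)
    _ = _ := by
      rw [ENNReal.tsum_mul_left, tsum_four_pow_mul_poissonPMF, mul_pow, ← pow_mul, mul_comm m,
        pow_mul, ← ENNReal.ofReal_pow (exp_pos _).le, ← exp_nat_mul, mul_comm]
      congr 2
      · ring_nf
      · rw [← ENNReal.inv_pow]; norm_num

namespace RTree

theorem getElem_lt_of_mem_gwTree {ω : List ℕ → ℕ} {w : List ℕ} (hw : w ∈ (gwTree ω).carrier)
    (j : ℕ) (hj : j < w.length) : w[j] < ω (w.take j) := by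
  have h := hw (w.take (j + 1)) (List.take_prefix _ _)
    (List.ne_nil_of_length_pos (by simp; omega))
  simp only [List.take_succ, List.getElem?_eq_getElem hj, Option.toList_some,
    List.getLast_concat, List.dropLast_concat] at h
  exact h

theorem measurableSet_mem_gwTree (w : List ℕ) :
    MeasurableSet {ω : List ℕ → ℕ | w ∈ (gwTree ω).carrier} := by
  have h : {ω : List ℕ → ℕ | w ∈ (gwTree ω).carrier} =
      ⋂ (u : List ℕ) (_ : u <+: w) (h : u ≠ []), {ω | u.getLast h < ω u.dropLast} := by
    ext
    simp [gwTree]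
  rw [h]
  exact .iInter fun u => .iInter fun _ => .iInter fun _ =>
    measurableSet_lt measurable_const (measurable_pi_apply u.dropLast)

theorem measurable_shiftω (v : List ℕ) : Measurable (shiftω v) := by
  unfold shiftω
  fun_prop

theorem measurable_encard_generation (v : List ℕ) (s : ℕ) :
    Measurable fun ω => ({w ∈ (gwTree (shiftω v ω)).carrier | w.length = s}.encard : ℝ≥0∞) :=
  measurable_encard_of_measurableSet_mem _ fun w =>
    ((measurableSet_mem_gwTree w).preimage (measurable_shiftω v)).inter (.const _)

variable {c : NNReal} {μ : Measure (List ℕ → ℕ)}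

theorem IsPoissonProduct.measure_forall_eq (hμ : IsPoissonProduct c μ) {n : ℕ}
    {v : Fin n → List ℕ} (hv : Function.Injective v) (g : Fin n → ℕ) :
    μ {ω | ∀ j, ω (v j) = g j} = ∏ j, poissonPMF c (g j) := by
  have h := hμ.2 (Finset.univ.image v) (Function.extend v g 0)
  rw [Finset.prod_image fun a _ b _ hab => hv hab] at h
  simpa [hv.extend_apply] using h

theorem IsPoissonProduct.measure_forall_le_le (hμ : IsPoissonProduct c μ) {n : ℕ}
    {v : Fin n → List ℕ} (hv : Function.Injective v) (m : Fin n → ℕ) :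
    μ {ω | ∀ j, m j ≤ ω (v j)} ≤ ∏ j, (poissonPMF c).toOuterMeasure (Set.Ici (m j)) := by
  have hcover : {ω : List ℕ → ℕ | ∀ j, m j ≤ ω (v j)} ⊆
      ⋃ g : Fin n → ℕ, {ω : List ℕ → ℕ | (∀ j, m j ≤ g j) ∧ ∀ j, ω (v j) = g j} :=
    fun ω hω => Set.mem_iUnion.2 ⟨fun j => ω (v j), hω, fun _ => rfl⟩
  have hpiece : ∀ g : Fin n → ℕ, μ {ω : List ℕ → ℕ | (∀ j, m j ≤ g j) ∧ ∀ j, ω (v j) = g j} ≤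
      ∏ j, (Set.Ici (m j)).indicator (poissonPMF c) (g j) := by
    intro g
    by_cases hg : ∀ j, m j ≤ g j
    · simp only [hg, implies_true, true_and, hμ.measure_forall_eq hv,
        Set.indicator_of_mem (show g _ ∈ Set.Ici (m _) from hg _), le_refl]
    · simp [hg]
  calc μ {ω | ∀ j, m j ≤ ω (v j)}
      ≤ ∑' g : Fin n → ℕ, ∏ j, (Set.Ici (m j)).indicator (poissonPMF c) (g j) :=
        (measure_mono hcover).trans ((measure_iUnion_le _).trans (ENNReal.tsum_le_tsum hpiece))
    _ = _ := by simp_rw [ENNReal.tsum_fin_pi_prod, PMF.toOuterMeasure_apply]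

theorem IsPoissonProduct.measure_ofFn_mem_gwTree_le (hμ : IsPoissonProduct c μ) (v : List ℕ)
    {s : ℕ} (g : Fin s → ℕ) :
    μ {ω | List.ofFn g ∈ (gwTree (shiftω v ω)).carrier} ≤
      ∏ j, (poissonPMF c).toOuterMeasure (Set.Ici (g j)) := by
  have hinj : Function.Injective fun j : Fin s => v ++ (List.ofFn g).take j := by
    intro a b hab
    have h := congrArg List.length hab
    simp only [List.length_append, List.length_take, List.length_ofFn] at h
    omega
  refine (measure_mono fun ω hω j => ?_).trans (hμ.measure_forall_le_le hinj g)
  have h := getElem_lt_of_mem_gwTree hω j (by simp)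
  simp only [List.getElem_ofFn, shiftω] at h
  exact h.le

theorem IsPoissonProduct.setLIntegral_encard_generation_le (hμ : IsPoissonProduct c μ)
    (v : List ℕ) (s : ℕ) {B : Set (List ℕ → ℕ)} {ε : ℝ≥0∞} (hB : μ B ≤ ε ^ 2) :
    ∫⁻ ω in B, ({w ∈ (gwTree (shiftω v ω)).carrier | w.length = s}.encard : ℝ≥0∞) ∂μ ≤
      (2 * ENNReal.ofReal (exp (3 * c / 2))) ^ s * ε := by
  set r : ℕ → ℝ≥0∞ := fun a => ENNReal.ofReal (exp (3 * c / 2)) * 2⁻¹ ^ a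
  have hcyl : ∀ g : Fin s → ℕ,
      μ {ω | List.ofFn g ∈ (gwTree (shiftω v ω)).carrier} ≤ (∏ j, r (g j)) ^ 2 := fun g => by
    rw [← Finset.prod_pow]
    exact (hμ.measure_ofFn_mem_gwTree_le v g).trans
      (Finset.prod_le_prod' fun j _ => poissonPMF_toOuterMeasure_Ici_le c (g j))
  have hr : ∑' a, r a = 2 * ENNReal.ofReal (exp (3 * c / 2)) := by
    rw [ENNReal.tsum_mul_left, ENNReal.tsum_geometric, ENNReal.one_sub_inv_two, inv_inv, mul_comm]
  simp_rw [List.encard_setOf_length_eq]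
  rw [setLIntegral_encard_eq_tsum
    (fun ω => {g : Fin s → ℕ | List.ofFn g ∈ (gwTree (shiftω v ω)).carrier}) μ
    (fun _ => (measurableSet_mem_gwTree _).preimage (measurable_shiftω v)) B]
  calc ∑' g : Fin s → ℕ, μ ({ω | g ∈ {g | List.ofFn g ∈ (gwTree (shiftω v ω)).carrier}} ∩ B)
      ≤ ∑' g : Fin s → ℕ, (∏ j, r (g j)) * ε := ENNReal.tsum_le_tsum fun g =>
        (le_min ((measure_mono Set.inter_subset_left).trans (hcyl g))
          ((measure_mono Set.inter_subset_right).trans hB)).trans (ENNReal.min_sq_le_mul _ _)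
    _ = (2 * ENNReal.ofReal (exp (3 * c / 2))) ^ s * ε := by
      rw [ENNReal.tsum_mul_right, ENNReal.tsum_fin_pi_prod fun _ => r, Finset.prod_const,
        Finset.card_univ, Fintype.card_fin, hr]

theorem expectation_on_bad_event_general (c : ℝ) (s : ℕ)
    (μ : Measure (List ℕ → ℕ)) (hμ : IsPoissonProduct c.toNNReal μ)
    (K γ : ℝ) (hK : 0 < K) (hγ : 0 < γ) :
    ∃ k' κ : ℝ, 0 < k' ∧ 0 < κ ∧ ∀ t : ℕ, 0 < t → ∀ BAD : Set (List ℕ → ℕ),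
      μ BAD ≤ ENNReal.ofReal (K * Real.exp (-(t * γ))) →
      ∫⁻ ω in BAD, ENat.toENNReal (∑ i ∈ Finset.range t,
          {w ∈ (gwTree (shiftω [i] ω)).carrier | w.length = s}.encard) ∂μ
        ≤ ENNReal.ofReal (k' * t * Real.exp (-(t * κ))) := by
  set C := 2 * exp (3 * c.toNNReal / 2)
  refine ⟨C ^ s * √K, γ / 2, by positivity, by positivity, fun t _ BAD hBAD => ?_⟩
  set ε := ENNReal.ofReal (√K * exp (-(t * (γ / 2))))
  have hε : μ BAD ≤ ε ^ 2 := by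
    rwa [← ENNReal.ofReal_pow (by positivity), mul_pow, sq_sqrt hK.le, ← exp_nat_mul,
      show ((2 : ℕ) : ℝ) * -(t * (γ / 2)) = -(t * γ) by push_cast; ring]
  calc ∫⁻ ω in BAD, ENat.toENNReal (∑ i ∈ Finset.range t,
          {w ∈ (gwTree (shiftω [i] ω)).carrier | w.length = s}.encard) ∂μ
      = ∑ i ∈ Finset.range t, ∫⁻ ω in BAD,
          ({w ∈ (gwTree (shiftω [i] ω)).carrier | w.length = s}.encard : ℝ≥0∞) ∂μ := by
        simp_rw [← ENat.toENNRealRingHom_apply, map_sum, ENat.toENNRealRingHom_apply]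
        exact lintegral_finsetSum _ fun i _ => measurable_encard_generation [i] s
    _ ≤ ∑ i ∈ Finset.range t, ENNReal.ofReal C ^ s * ε := Finset.sum_le_sum fun i _ => by
        rw [ENNReal.ofReal_mul zero_le_two, ENNReal.ofReal_ofNat]
        exact hμ.setLIntegral_encard_generation_le [i] s hε
    _ = ENNReal.ofReal (C ^ s * √K * t * exp (-(t * (γ / 2)))) := by
        rw [Finset.sum_const, Finset.card_range, nsmul_eq_mul,
          ← ENNReal.ofReal_pow (by positivity), ← ENNReal.ofReal_natCast,
          ← ENNReal.ofReal_mul (by positivity), ← ENNReal.ofReal_mul (by positivity)]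
        congr 1
        ring

/-- **Lemma (expectation of `Y` on a rare event).**
Fix `c > 0` and a nonnegative integer `s`, and let `Y` be the sum of `t` independent
copies of `X(c,s)`, the number of generation-`s` nodes of the Galton–Watson tree `T_c`
(realized here as the numbers of generation-`s` descendants of `t` independent
Galton–Watson trees).  Let `K, γ > 0` and let `BAD` be any event with
`P[BAD] ≤ K·e^{-tγ}`.  Then there are positive constants `k'` and `κ` (depending on
`K`, `γ`, `c`, `s` but not on `t` or on the event) with
`E[Y · 1_BAD] ≤ k'·t·e^{-tκ}`. -/
theorem expectation_on_bad_event (c : ℝ) (hc : 0 < c) (s : ℕ)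
    (μ : Measure (List ℕ → ℕ)) (hμ : IsPoissonProduct c.toNNReal μ)
    (K γ : ℝ) (hK : 0 < K) (hγ : 0 < γ) :
    ∃ k' κ : ℝ, 0 < k' ∧ 0 < κ ∧ ∀ t : ℕ, 0 < t → ∀ BAD : Set (List ℕ → ℕ),
      μ BAD ≤ ENNReal.ofReal (K * Real.exp (-(t * γ))) →
      ∫⁻ ω in BAD, ENat.toENNReal (∑ i ∈ Finset.range t,
          {w ∈ (gwTree (shiftω [i] ω)).carrier | w.length = s}.encard) ∂μ
        ≤ ENNReal.ofReal (k' * t * Real.exp (-(t * κ))) :=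
  expectation_on_bad_event_general c s μ hμ K γ hK hγ

end RTree
end
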